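/- arXiv:0708.3224 — 11 statements merged into one kernel-verified Lean document; each statement's English description precedes it below -/
import Mathlib

section
/- Let a_1, ..., a_k be positive integers with gcd(a_1, ..., a_k) = 1. Then the state complexity of the unary language {0^{a_1}, ..., 0^{a_k}}* equals g(a_1, ..., a_k) + 2, where g is the Frobenius number. -/
/-!
A unary word is determined by its length, so `{0^{a_1}, …, 0^{a_k}}∗` is the set of words whose
length lies in the numerical semigroup generated by the `a_i`. A unary language whose length set
`P` has largest gap `g` is recognised by the counter automaton with states `0, …, g + 1` that
saturates at `g + 1`. Conversely, the words `0^i` for `i ≤ g + 1` have pairwise distinct left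
quotients: for `i < j` the suffix `0^{g - i}` is rejected after `0^i` and accepted after `0^j`.
So every automaton for the language needs at least `g + 2` states.
-/

open Computability

/-- The state complexity of a language: the least number of states of a complete DFA
accepting it. -/
noncomputable def stateComplexity {α : Type} (L : Language α) : ℕ :=
  sInf {n : ℕ | ∃ M : DFA α (Fin n), M.accepts = L}

theorem stateComplexity_eq_of_accepts {α : Type} {L : Language α} {n : ℕ}
    (M : DFA α (Fin n)) (hM : M.accepts = L)
    (hmin : ∀ m (N : DFA α (Fin m)), N.accepts = L → n ≤ m) :
    stateComplexity L = n :=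
  IsLeast.csInf_eq ⟨⟨M, hM⟩, fun _ ⟨N, hN⟩ => hmin _ N hN⟩

theorem DFA.card_le_of_injective_leftQuotient {α σ ι : Type*} [Fintype σ] [Fintype ι]
    (M : DFA α σ) (w : ι → List α) (hw : Function.Injective (M.accepts.leftQuotient ∘ w)) :
    Fintype.card ι ≤ Fintype.card σ := by
  rw [Language.leftQuotient_accepts] at hw
  exact Fintype.card_le_of_injective (M.eval ∘ w) (hw.of_comp (f := M.acceptsFrom))

theorem List.eq_replicate_length_unit (w : List Unit) : w = List.replicate w.length () :=
  List.eq_replicate_of_mem fun _ _ => rfl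

def unaryLanguage (P : Set ℕ) : Language Unit := {w | w.length ∈ P}

@[simp]
theorem mem_unaryLanguage {P : Set ℕ} {w : List Unit} : w ∈ unaryLanguage P ↔ w.length ∈ P :=
  Iff.rfl

theorem kstar_eq_unaryLanguage (L : Language Unit) :
    L∗ = unaryLanguage (AddSubmonoid.closure (List.length '' L)) := by
  ext w
  rw [mem_unaryLanguage, Language.mem_kstar]
  constructor
  · rintro ⟨ws, rfl, hws⟩
    rw [List.length_flatten]
    refine AddSubmonoid.list_sum_mem _ fun n hn => ?_
    obtain ⟨v, hv, rfl⟩ := List.mem_map.1 hn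
    exact AddSubmonoid.subset_closure ⟨v, hws v hv, rfl⟩
  · intro hw
    obtain ⟨ns, hns, hsum⟩ := AddSubmonoid.exists_list_of_mem_closure hw
    refine ⟨ns.map (List.replicate · ()), ?_, ?_⟩
    · refine w.eq_replicate_length_unit.trans (List.eq_replicate_iff.2 ⟨?_, fun _ _ => rfl⟩).symm
      simp [List.length_flatten, Function.comp_def, hsum]
    · simp only [List.mem_map]
      rintro _ ⟨n, hn, rfl⟩
      obtain ⟨v, hv, rfl⟩ := hns n hn
      rwa [← v.eq_replicate_length_unit]

theorem leftQuotient_unaryLanguage (P : Set ℕ) (i : ℕ) :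
    (unaryLanguage P).leftQuotient (List.replicate i ()) = unaryLanguage ((i + ·) ⁻¹' P) := by
  ext w
  simp [Language.mem_leftQuotient]

theorem IsGreatest.mem_of_lt_of_compl {P : Set ℕ} {g m : ℕ} (hg : IsGreatest Pᶜ g) (hm : g < m) :
    m ∈ P :=
  not_not.1 fun h => (hg.2 h).not_gt hm

theorem leftQuotient_replicate_ne_of_isGreatest_compl {P : Set ℕ} {g i j : ℕ}
    (hg : IsGreatest Pᶜ g) (hi : i ≤ g) (hij : i < j) :
    (unaryLanguage P).leftQuotient (List.replicate i ()) ≠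
      (unaryLanguage P).leftQuotient (List.replicate j ()) := by
  refine (ne_of_mem_of_not_mem' (a := List.replicate (g - i) ()) ?_ ?_).symm <;>
    simp only [leftQuotient_unaryLanguage, mem_unaryLanguage, List.length_replicate,
      Set.mem_preimage]
  · exact hg.mem_of_lt_of_compl (by omega)
  · rw [Nat.add_sub_cancel' hi]
    exact hg.1

theorem card_le_of_accepts_unaryLanguage {σ : Type*} [Fintype σ] {P : Set ℕ} {g : ℕ}
    (hg : IsGreatest Pᶜ g) (M : DFA Unit σ) (hM : M.accepts = unaryLanguage P) :
    g + 2 ≤ Fintype.card σ := by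
  have hinj : Function.Injective
      (M.accepts.leftQuotient ∘ fun i : Fin (g + 2) => List.replicate i ()) := by
    intro i j hij
    simp only [Function.comp_apply, hM] at hij
    by_contra hne
    rcases lt_or_gt_of_ne (Fin.val_ne_of_ne hne) with h | h
    · exact leftQuotient_replicate_ne_of_isGreatest_compl hg (by omega) h hij
    · exact leftQuotient_replicate_ne_of_isGreatest_compl hg (by omega) h hij.symm
  simpa using M.card_le_of_injective_leftQuotient _ hinj

def unaryCounterDFA (P : Set ℕ) (t : ℕ) : DFA Unit (Fin (t + 1)) where
  step q _ := ⟨min (q + 1) t, by omega⟩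
  start := 0
  accept := {q | (q : ℕ) ∈ P}

theorem eval_unaryCounterDFA (P : Set ℕ) (t n : ℕ) :
    (unaryCounterDFA P t).eval (List.replicate n ()) = ⟨min n t, by omega⟩ := by
  induction n with
  | zero => rfl
  | succ n ih =>
    rw [List.replicate_succ', DFA.eval_append_singleton, ih]
    ext
    simp [unaryCounterDFA]
    omega

theorem accepts_unaryCounterDFA {P : Set ℕ} {t : ℕ} (hP : ∀ m, t ≤ m → (m ∈ P ↔ t ∈ P)) :
    (unaryCounterDFA P t).accepts = unaryLanguage P := by
  ext w
  rw [DFA.mem_accepts, mem_unaryLanguage, w.eq_replicate_length_unit, eval_unaryCounterDFA,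
    List.length_replicate]
  change min w.length t ∈ P ↔ w.length ∈ P
  rcases le_total w.length t with h | h
  · rw [min_eq_left h]
  · rw [min_eq_right h, hP _ h]

theorem stateComplexity_unaryLanguage {P : Set ℕ} {g : ℕ} (hg : IsGreatest Pᶜ g) :
    stateComplexity (unaryLanguage P) = g + 2 := by
  refine stateComplexity_eq_of_accepts (unaryCounterDFA P (g + 1)) ?_ fun m N hN => ?_
  · exact accepts_unaryCounterDFA fun m hm =>
      iff_of_true (hg.mem_of_lt_of_compl (by omega)) (hg.mem_of_lt_of_compl (by omega))
  · simpa using card_le_of_accepts_unaryLanguage hg N hN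

theorem stateComplexity_unary_kstar_general (k : ℕ) (a : Fin k → ℕ)
    (g : ℕ) (hg : IsGreatest {n : ℕ | n ∉ AddSubmonoid.closure (Set.range a)} g)
    (S : Language Unit) (hS : S = Set.range (fun i => List.replicate (a i) ())) :
    stateComplexity (S∗) = g + 2 := by
  have hlengths : List.length '' S = Set.range a := by
    rw [hS, ← Set.range_comp]
    simp [Function.comp_def]
  rw [kstar_eq_unaryLanguage, hlengths]
  exact stateComplexity_unaryLanguage hg

/-- For positive integers `a 1, …, a k` with gcd 1, the state complexity of
the unary language `{0^{a 1}, …, 0^{a k}}∗` equals the Frobenius number plus 2. -/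
theorem stateComplexity_unary_kstar (k : ℕ) (a : Fin k → ℕ) (ha : ∀ i, 0 < a i)
    (hgcd : Finset.univ.gcd a = 1)
    (g : ℕ) (hg : IsGreatest {n : ℕ | n ∉ AddSubmonoid.closure (Set.range a)} g)
    (S : Language Unit) (hS : S = Set.range (fun i => List.replicate (a i) ())) :
    stateComplexity (S∗) = g + 2 :=
  stateComplexity_unary_kstar_general k a g hg S hS
end

section
/- Let x_1, ..., x_k be nonempty words over an alphabet Σ. The language L = x_1* x_2* ... x_k* (all concatenations of a power of x_1, then a power of x_2, etc.) is co-finite in Σ* if and only if |Σ| = 1 and gcd(|x_1|, ..., |x_k|) = 1. -/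
/-!
The word `x₁^e₁ ⋯ x_k^e_k` has length `∑ eᵢ |xᵢ|`. Over a one-letter alphabet a word is determined
by its length, so `L` is co-finite exactly when every large number lies in the additive monoid
generated by the `|xᵢ|`, i.e. when their gcd is `1`. Over a larger alphabet `L` is never
co-finite: a word of length `n` in `L` is determined by an exponent vector in `{0, …, n}ᵏ`, and
`(n + 1)ᵏ < 2ⁿ ≤ |Σ|ⁿ` for large `n`.
-/

open Filter

theorem eventually_add_one_pow_lt_two_pow (k : ℕ) : ∀ᶠ n : ℕ in atTop, (n + 1) ^ k < 2 ^ n := by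
  have h := (tendsto_add_atTop_iff_nat 1).2 (tendsto_pow_const_div_const_pow_of_one_lt k one_lt_two)
  filter_upwards [h.eventually (gt_mem_nhds (by norm_num : (0 : ℝ) < 1 / 2))] with n hn
  rw [div_lt_iff₀ (by positivity), pow_succ] at hn
  exact_mod_cast (by push_cast at hn ⊢; linarith : ((n + 1 : ℕ) : ℝ) ^ k < 2 ^ n)

theorem gcd_eq_one_iff_exists_forall_ge_mem_closure {ι : Type*} [Fintype ι] (ℓ : ι → ℕ) :
    Finset.univ.gcd ℓ = 1 ↔ ∃ N, ∀ n ≥ N, n ∈ AddSubmonoid.closure (Set.range ℓ) := by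
  constructor
  · intro h
    obtain ⟨N, hN⟩ := Nat.exists_mem_closure_of_ge (Set.range ℓ)
    have hdvd : Nat.setGcd (Set.range ℓ) ∣ 1 :=
      h ▸ Finset.dvd_gcd fun i _ => Nat.setGcd_dvd_of_mem (Set.mem_range_self i)
    exact ⟨N, fun n hn => hN n hn (hdvd.trans (one_dvd n))⟩
  · rintro ⟨N, hN⟩
    have hdvd : ∀ n ≥ N, Finset.univ.gcd ℓ ∣ n := fun n hn => by
      obtain ⟨e, rfl⟩ := AddSubmonoid.mem_closure_range_iff_of_fintype.1 (hN n hn)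
      exact Finset.dvd_sum fun i _ => Dvd.dvd.mul_left (Finset.gcd_dvd (Finset.mem_univ i)) _
    exact Nat.dvd_one.1 <| (Nat.dvd_add_right (hdvd N le_rfl)).1 (hdvd (N + 1) N.le_succ)

theorem Language.finite_compl_iff_exists_forall_length_ge_mem {α : Type*} [Finite α]
    (L : Language α) : Set.Finite Lᶜ ↔ ∃ N, ∀ w : List α, N ≤ w.length → w ∈ L := by
  constructor
  · intro h
    obtain ⟨M, hM⟩ := (h.image List.length).bddAbove
    exact ⟨M + 1, fun w hw => by_contra fun hwL => by have := hM ⟨w, hwL, rfl⟩; omega⟩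
  · rintro ⟨N, hN⟩
    exact (List.finite_length_lt α N).subset fun w hw => not_le.1 fun h => hw (hN w h)

def starWord {α : Type*} {k : ℕ} (x : Fin k → List α) (e : Fin k → ℕ) : List α :=
  (List.ofFn fun i => (List.replicate (e i) (x i)).flatten).flatten

section starWord

variable {α : Type*} {k : ℕ} (x : Fin k → List α) (e : Fin k → ℕ)

theorem length_starWord : (starWord x e).length = ∑ i, e i * (x i).length := by
  simp [starWord, List.length_flatten, List.map_ofFn, Function.comp_def, List.sum_ofFn]

theorem length_starWord_mem_closure :
    (starWord x e).length ∈ AddSubmonoid.closure (Set.range fun i => (x i).length) :=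
  AddSubmonoid.mem_closure_range_iff_of_fintype.2 ⟨e, length_starWord x e⟩

variable {x}

theorem le_length_starWord (hx : ∀ i, x i ≠ []) (i : Fin k) : e i ≤ (starWord x e).length :=
  calc e i ≤ e i * (x i).length := Nat.le_mul_of_pos_right _ (List.length_pos_iff.2 (hx i))
    _ ≤ ∑ j, e j * (x j).length :=
      Finset.single_le_sum (f := fun j => e j * (x j).length) (by simp) (Finset.mem_univ i)
    _ = (starWord x e).length := (length_starWord x e).symm

theorem card_pow_le_of_forall_length_eq_starWord [Fintype α] (hx : ∀ i, x i ≠ []) {n : ℕ}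
    (h : ∀ w : List α, w.length = n → ∃ e, w = starWord x e) :
    Fintype.card α ^ n ≤ (n + 1) ^ k := by
  choose e he using fun v : List.Vector α n => h v.1 v.2
  have hbound (v : List.Vector α n) (i : Fin k) : e v i < n + 1 :=
    Nat.lt_succ_of_le (v.2 ▸ he v ▸ le_length_starWord (e v) hx i)
  have hinj : Function.Injective fun v i => (⟨e v i, hbound v i⟩ : Fin (n + 1)) := by
    intro v w hvw
    refine Subtype.ext ?_
    rw [he v, he w]
    exact congrArg _ (funext fun i => congrArg Fin.val (congrFun hvw i))
  simpa [card_vector] using Fintype.card_le_of_injective _ hinj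

theorem card_le_one_of_forall_length_ge_eq_starWord [Fintype α] (hx : ∀ i, x i ≠ []) {N : ℕ}
    (h : ∀ w : List α, N ≤ w.length → ∃ e, w = starWord x e) : Fintype.card α ≤ 1 := by
  by_contra! hα
  obtain ⟨n, hn, hlt⟩ := ((eventually_ge_atTop N).and (eventually_add_one_pow_lt_two_pow k)).exists
  have hle := card_pow_le_of_forall_length_eq_starWord hx fun w hw => h w (hw ▸ hn)
  have : 2 ^ n ≤ Fintype.card α ^ n := Nat.pow_le_pow_left hα n
  omega

end starWord

/-- For nonempty words `x 1, …, x k` over a finite alphabet `Σ`, the language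
`x 1∗ x 2∗ ⋯ x k∗` is co-finite iff `|Σ| = 1` and `gcd(|x 1|, …, |x k|) = 1`. -/
theorem product_of_stars_cofinite_iff {α : Type} [Fintype α] (k : ℕ) (hk : 0 < k)
    (x : Fin k → List α) (hx : ∀ i, x i ≠ [])
    (L : Language α)
    (hL : L = {w : List α | ∃ e : Fin k → ℕ,
      w = (List.ofFn (fun i => (List.replicate (e i) (x i)).flatten)).flatten}) :
    Set.Finite ((L : Language α)ᶜ) ↔
      (Fintype.card α = 1 ∧ Finset.univ.gcd (fun i => (x i).length) = 1) := by
  replace hL : L = {w | ∃ e, w = starWord x e} := hL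
  rw [Language.finite_compl_iff_exists_forall_length_ge_mem,
    gcd_eq_one_iff_exists_forall_ge_mem_closure, hL]
  constructor
  · rintro ⟨N, hN⟩
    obtain ⟨a⟩ : Nonempty α := ⟨(x ⟨0, hk⟩).head (hx _)⟩
    refine ⟨(card_le_one_of_forall_length_ge_eq_starWord hx hN).antisymm
      (Fintype.card_pos_iff.2 ⟨a⟩), N, fun n hn => ?_⟩
    obtain ⟨e, he⟩ := hN (List.replicate n a) (by simpa using hn)
    simpa [← he] using length_starWord_mem_closure x e
  · rintro ⟨hcard, N, hN⟩
    have : Subsingleton α := Fintype.card_le_one_iff_subsingleton.1 hcard.le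
    refine ⟨N, fun w hw => ?_⟩
    obtain ⟨e, he⟩ := AddSubmonoid.mem_closure_range_iff_of_fintype.1 (hN _ hw)
    exact ⟨e, List.ext_getElem (he.trans (length_starWord x e).symm)
      fun _ _ _ => Subsingleton.elim _ _⟩
end

section
/- Let x_1, ..., x_k be nonempty words over Σ with total length m such that no x_i is a proper prefix of any x_j. Then the state complexity of {x_1, ..., x_k}* is at most m − k + 2. -/
open Computability

namespace KStarSCAux

/-- If a language is accepted by a DFA over a finite nonempty state type with at most `n`
states, then its state complexity is at most `n`. -/
theorem sc_le_of_dfa {α : Type} {Q : Type} [Finite Q] [Nonempty Q] (M : DFA α Q)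
    {n : ℕ} (hn : Nat.card Q ≤ n) : stateComplexity M.accepts ≤ n := by
  classical
  have := Fintype.ofFinite Q
  have hcard : Fintype.card Q ≤ n := by rwa [Nat.card_eq_fintype_card] at hn
  obtain ⟨e⟩ : Nonempty (Q ↪ Fin n) :=
    ⟨(Fintype.equivFin Q).toEmbedding.trans (Fin.castLEEmb hcard)⟩
  let f : Fin n → Q := Function.invFun e
  have hfe : ∀ q, f (e q) = q := fun q => Function.leftInverse_invFun e.injective q
  let M' : DFA α (Fin n) :=
    ⟨fun q a => e (M.step (f q) a), e M.start, {q | f q ∈ M.accept}⟩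
  have key : ∀ (w : List α) (q : Q), M'.evalFrom (e q) w = e (M.evalFrom q w) := by
    intro w
    induction w with
    | nil => intro q; rfl
    | cons a w ih =>
        intro q
        have h1 : M'.evalFrom (e q) (a :: w) = M'.evalFrom (M'.step (e q) a) w := rfl
        have h2 : M.evalFrom q (a :: w) = M.evalFrom (M.step q a) w := rfl
        rw [h1, h2]
        have : M'.step (e q) a = e (M.step q a) := by
          show e (M.step (f (e q)) a) = e (M.step q a)
          rw [hfe]
        rw [this, ih]
  have hacc : M'.accepts = M.accepts := by
    ext w
    rw [DFA.mem_accepts, DFA.mem_accepts]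
    show M'.evalFrom (e M.start) w ∈ M'.accept ↔ _
    rw [key w M.start]
    show f (e (M.evalFrom M.start w)) ∈ M.accept ↔ _
    rw [hfe]
    rfl
  have : n ∈ {n : ℕ | ∃ N : DFA α (Fin n), N.accepts = M.accepts} := ⟨M', hacc⟩
  exact csInf_le (OrderBot.bddBelow _) this

variable {α : Type} {k : ℕ} (x : Fin k → List α)

/-- The Kleene-star base language. -/
def SL : Language α := Set.range x

/-- The set of nonempty proper prefixes of the words `x i`. -/
def P : Set (List α) := {v | v ≠ [] ∧ ∃ i, v <+: x i ∧ v ≠ x i}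

/-- The set of labels of live states. -/
def Q0 : Set (List α) := insert [] (P x)

/-- The state type: `none` is the dead state; other states are labelled by `[]` or a
nonempty proper prefix. -/
abbrev Q := Option ↥(Q0 x)

theorem nil_mem_Q0 : ([] : List α) ∈ Q0 x := Set.mem_insert _ _

/-- The accepting / start state, labelled by the empty word. -/
def eps : Q x := some ⟨[], nil_mem_Q0 x⟩

open Classical in
/-- The transition function. -/
noncomputable def step : Q x → α → Q x
  | none, _ => none
  | some ⟨v, _⟩, a =>
      if v ++ [a] ∈ Set.range x then eps x
      else if h2 : v ++ [a] ∈ P x then some ⟨v ++ [a], Set.mem_insert_of_mem _ h2⟩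
      else none

/-- The DFA accepting `(range x)∗` (when `x` is prefix-free with nonempty words). -/
noncomputable def M : DFA α (Q x) := ⟨step x, eps x, {eps x}⟩

theorem P_finite : (P x).Finite := by
  have : P x ⊆ ⋃ i, {v | v ∈ (x i).inits} := by
    rintro v ⟨-, i, hpre, -⟩
    exact Set.mem_iUnion.2 ⟨i, by simpa [List.mem_inits] using hpre⟩
  exact Set.Finite.subset (Set.finite_iUnion fun i => (x i).inits.finite_toSet) this

theorem card_P_le : Nat.card (P x) ≤ ∑ i, ((x i).length - 1) := by
  classical
  have key : ∀ v : P x, ∃ p : Σ i : Fin k, Fin ((x i).length - 1),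
      (v : List α) <+: x p.1 ∧ ((p.2 : ℕ)) = (v : List α).length - 1 := by
    rintro ⟨v, hne, i, hpre, hneq⟩
    have hlt : v.length < (x i).length :=
      lt_of_le_of_ne hpre.length_le (fun hl => hneq (hpre.eq_of_length hl))
    have hpos : 0 < v.length := List.length_pos_iff.2 hne
    exact ⟨⟨i, ⟨v.length - 1, by omega⟩⟩, hpre, rfl⟩
  choose g hg1 hg2 using key
  have hginj : Function.Injective g := by
    rintro v w h
    have hi : (g v).1 = (g w).1 := congrArg Sigma.fst h
    have hn : ((g v).2 : ℕ) = ((g w).2 : ℕ) := by rw [h]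
    have hv1 : (v : List α) ≠ [] := v.2.1
    have hw1 : (w : List α) ≠ [] := w.2.1
    have hvp : 0 < (v : List α).length := List.length_pos_iff.2 hv1
    have hwp : 0 < (w : List α).length := List.length_pos_iff.2 hw1
    have hlen : (v : List α).length = (w : List α).length := by
      have := hg2 v; have := hg2 w; omega
    have hpv : (v : List α) <+: x (g v).1 := hg1 v
    have hpw : (w : List α) <+: x (g v).1 := hi ▸ hg1 w
    have : (v : List α) = (w : List α) := by
      rw [List.prefix_iff_eq_take.1 hpv, List.prefix_iff_eq_take.1 hpw, hlen]
    exact Subtype.ext this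
  have h1 := Nat.card_le_card_of_injective g hginj
  calc Nat.card (P x) ≤ Nat.card (Σ i : Fin k, Fin ((x i).length - 1)) := h1
    _ = ∑ i, ((x i).length - 1) := by
        simp [Nat.card_eq_fintype_card, Fintype.card_sigma]

theorem Q0_finite : (Q0 x).Finite := (P_finite x).insert _

instance : Finite (Q0 x) := (Q0_finite x).to_subtype

theorem card_Q_le : Nat.card (Q x) ≤ ∑ i, ((x i).length - 1) + 2 := by
  classical
  have h2 : Nat.card (Q x) = Nat.card (Q0 x) + 1 := by
    have := Fintype.ofFinite ↥(Q0 x)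
    simp [Nat.card_eq_fintype_card]
  have h1 : Nat.card (Q0 x) ≤ Nat.card (P x) + 1 := by
    rw [Nat.card_coe_set_eq, Nat.card_coe_set_eq]
    exact Set.ncard_insert_le _ _
  have := card_P_le x
  omega

/-- Reading the rest of a word `x i` from a proper-prefix state returns to `eps`. -/
theorem evalFrom_rest (hpref : ∀ i j, x i <+: x j → x i = x j) (i : Fin k) :
    ∀ (s v : List α), x i = v ++ s → s ≠ [] → (hv : v ∈ Q0 x) →
      (M x).evalFrom (some ⟨v, hv⟩) s = eps x := by
  intro s
  induction s with
  | nil => intro v _ hs _; exact absurd rfl hs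
  | cons a t ih =>
      intro v hxi _ hv
      have hstep : (M x).evalFrom (some ⟨v, hv⟩) (a :: t)
          = (M x).evalFrom (step x (some ⟨v, hv⟩) a) t := rfl
      rcases eq_or_ne t [] with ht | ht
      · subst ht
        have hmem : v ++ [a] ∈ Set.range x := ⟨i, by simp [hxi]⟩
        rw [hstep]
        have : step x (some ⟨v, hv⟩) a = eps x := by
          simp only [step, hmem, if_pos]
        rw [this]
        rfl
      · have hnmem : v ++ [a] ∉ Set.range x := by
          rintro ⟨j, hj⟩
          have hpj : x j <+: x i := ⟨t, by rw [hj, hxi]; simp⟩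
          have heq := hpref j i hpj
          rw [hj, hxi] at heq
          have h2 : [a] = a :: t := by
            have := heq
            rwa [List.append_cancel_left_eq] at this
          obtain ⟨-, h3⟩ := List.cons.inj h2
          exact ht h3.symm
        have hP : v ++ [a] ∈ P x := by
          refine ⟨by simp, i, ⟨t, by rw [hxi]; simp⟩, ?_⟩
          intro hc
          rw [hxi] at hc
          have h2 : [a] = a :: t := by rwa [List.append_cancel_left_eq] at hc
          obtain ⟨-, h3⟩ := List.cons.inj h2
          exact ht h3.symm
        rw [hstep]
        have : step x (some ⟨v, hv⟩) a = some ⟨v ++ [a], Set.mem_insert_of_mem _ hP⟩ := by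
          simp only [step, hnmem, if_neg, not_false_iff, hP, dif_pos]
        rw [this]
        exact ih (v ++ [a]) (by rw [hxi]; simp) ht _

theorem evalFrom_word (hx : ∀ i, x i ≠ []) (hpref : ∀ i j, x i <+: x j → x i = x j)
    (i : Fin k) : (M x).evalFrom (eps x) (x i) = eps x :=
  evalFrom_rest x hpref i (x i) [] rfl (hx i) (nil_mem_Q0 x)

/-- The backwards invariant: any live state decomposes the input. -/
theorem invariant : ∀ (w : List α) (v : List α) (hv : v ∈ Q0 x),
    (M x).eval w = some ⟨v, hv⟩ →
    ∃ u, u ∈ (SL x)∗ ∧ w = u ++ v := by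
  intro w
  induction w using List.reverseRecOn with
  | nil =>
      intro v hv h
      have h0 : (M x).eval [] = eps x := rfl
      rw [h0] at h
      have hv0 : v = [] := congrArg Subtype.val (Option.some_injective _ h.symm)
      exact ⟨[], Language.nil_mem_kstar _, by simp [hv0]⟩
  | append_singleton w a ih =>
      intro v hv h
      rw [DFA.eval_append_singleton] at h
      rcases heval : (M x).eval w with _ | ⟨v', hv'⟩
      · rw [heval] at h
        exact absurd h (by simp [M, step])
      · rw [heval] at h
        obtain ⟨u, hu, huw⟩ := ih v' hv' heval
        by_cases h1 : v' ++ [a] ∈ Set.range x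
        · have hstep : (M x).step (some ⟨v', hv'⟩) a = eps x := by
            simp only [M, step, h1, if_pos]
          rw [hstep] at h
          have hv0 : v = [] := congrArg Subtype.val (Option.some_injective _ h.symm)
          refine ⟨w ++ [a], ?_, by simp [hv0]⟩
          have heq : w ++ [a] = u ++ (v' ++ [a]) := by rw [huw]; simp
          rw [heq]
          have hmem : u ++ (v' ++ [a]) ∈ (SL x)∗ * SL x :=
            Language.append_mem_mul hu h1
          have hle : (SL x)∗ * SL x ≤ (SL x)∗ := kstar_mul_le_kstar
          exact hle hmem
        · by_cases h2 : v' ++ [a] ∈ P x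
          · have hstep : (M x).step (some ⟨v', hv'⟩) a
                = some ⟨v' ++ [a], Set.mem_insert_of_mem _ h2⟩ := by
              simp only [M, step, h1, if_neg, not_false_iff, h2, dif_pos]
            rw [hstep] at h
            have hveq : v = v' ++ [a] := congrArg Subtype.val (Option.some_injective _ h.symm)
            exact ⟨u, hu, by rw [hveq, huw]; simp⟩
          · have hstep : (M x).step (some ⟨v', hv'⟩) a = none := by
              simp only [M, step, h1, if_neg, not_false_iff, h2, dif_neg]
            rw [hstep] at h
            exact absurd h (by simp)

theorem accepts_M (hx : ∀ i, x i ≠ []) (hpref : ∀ i j, x i <+: x j → x i = x j) :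
    (M x).accepts = (SL x)∗ := by
  ext w
  rw [DFA.mem_accepts]
  constructor
  · intro h
    have heq : (M x).eval w = eps x := h
    obtain ⟨u, hu, huw⟩ := invariant x w [] (nil_mem_Q0 x) heq
    simpa [huw] using hu
  · intro h
    obtain ⟨L, hL, hmem⟩ := Language.mem_kstar.1 h
    subst hL
    show (M x).eval L.flatten ∈ ({eps x} : Set (Q x))
    have key : ∀ L : List (List α), (∀ y ∈ L, y ∈ SL x) →
        (M x).evalFrom (eps x) L.flatten = eps x := by
      intro L
      induction L with
      | nil => intro _; rfl
      | cons y L ihL =>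
          intro hmem
          have hy : y ∈ Set.range x := hmem y (by simp)
          obtain ⟨i, hi⟩ := hy
          have hflat : (y :: L).flatten = y ++ L.flatten := rfl
          rw [hflat, DFA.evalFrom_of_append]
          have hyeval : (M x).evalFrom (eps x) y = eps x := by
            rw [← hi]; exact evalFrom_word x hx hpref i
          rw [hyeval]
          exact ihL fun z hz => hmem z (by simp [hz])
    exact key L hmem

end KStarSCAux

/-- For nonempty words `x 1, …, x k` with total length `m`, none of which is
a proper prefix of another, the state complexity of `{x 1, …, x k}∗` is at most `m − k + 2`. -/
theorem kstar_sc_le_of_prefix_free {α : Type} (k : ℕ) (x : Fin k → List α)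
    (hx : ∀ i, x i ≠ []) (m : ℕ) (hm : m = ∑ i, (x i).length)
    (hpref : ∀ i j, x i <+: x j → x i = x j)
    (S : Language α) (hS : S = Set.range x) :
    stateComplexity (S∗) ≤ m - k + 2 := by
  classical
  have hsum : ∑ i, ((x i).length - 1) = m - k := by
    rw [hm]
    have hone : ∀ i ∈ (Finset.univ : Finset (Fin k)), 1 ≤ (x i).length := by
      intro i _
      exact Nat.one_le_iff_ne_zero.2 fun h0 => hx i (List.eq_nil_of_length_eq_zero h0)
    rw [Finset.sum_tsub_distrib _ hone]
    simp
  haveI : Finite ↥(KStarSCAux.Q0 x) := (KStarSCAux.Q0_finite x).to_subtype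
  haveI := Fintype.ofFinite ↥(KStarSCAux.Q0 x)
  haveI : Finite (KStarSCAux.Q x) := inferInstance
  have hcard : Nat.card (KStarSCAux.Q x) ≤ m - k + 2 := by
    have := KStarSCAux.card_Q_le x
    omega
  have hacc : (KStarSCAux.M x).accepts = S∗ := by
    rw [KStarSCAux.accepts_M x hx hpref, hS]; rfl
  calc stateComplexity (S∗) = stateComplexity (KStarSCAux.M x).accepts := by rw [hacc]
    _ ≤ m - k + 2 := KStarSCAux.sc_le_of_dfa _ hcard
end

section
/- For an integer t ≥ 2, define over {0,1} the words y = 0 1^{t−1} 0 and x_i = 1^{t−i−1} 0 1^{i+1} for 0 ≤ i ≤ t−2, and let S_t = {0, x_0, x_1, ..., x_{t−2}, y}. Then the state complexity of S_t* is at least 2^{t−2}. -/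
open Computability

/-!
Write `runs t v` for the set of `k` with `v 0 1^k ∈ S_t∗` and picture it as a set of points on a
cycle of length `t`, seen from a marker at `0`. Looking at the last factor (`0`, `y` or
`1^(t-k) 0 1^k`), appending `0 1^c` to `v` moves the marker back by `t - c` and erases the points
it passes over; the point under the new marker survives iff `c ∈ runs t v`, and it is created
when `c = t - 1` and `v ∈ S_t∗` (the factor `y`). Creating points next to the marker one at a time
fills the whole cycle; walking the marker down through the full cycle and landing exactly on the
points of a chosen `D ⊆ {1, …, t - 2}` then realises every pattern on `{1, …, t - 2}`. The
`2 ^ (t - 2)` words `v 0` so obtained have pairwise distinct left quotients, and `S_t∗` is regular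
because `S_t` is finite.
-/

theorem List.append_cons_replicate_eq_append_replicate_iff {α : Type*} {a b : α} (hba : b ≠ a)
    {u v : List α} {c e : ℕ} :
    v ++ b :: replicate c a = u ++ replicate e a ↔ e ≤ c ∧ u = v ++ b :: replicate (c - e) a := by
  induction e generalizing c with
  | zero => simp [eq_comm]
  | succ e ih =>
    cases c with
    | zero =>
      rw [replicate_succ', ← append_assoc]
      refine iff_of_false (fun h => hba ?_) (by omega)
      simpa using (append_inj' h rfl).2
    | succ c =>
      rw [replicate_succ', replicate_succ', ← cons_append, ← append_assoc, ← append_assoc,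
        append_left_inj, ih]
      simp

theorem List.append_cons_replicate_inj {α : Type*} {a b : α} (hba : b ≠ a) {u v : List α}
    {m n : ℕ} : v ++ b :: replicate m a = u ++ b :: replicate n a ↔ v = u ∧ m = n := by
  refine ⟨fun h => ?_, by rintro ⟨rfl, rfl⟩; rfl⟩
  have hnm := ((append_cons_replicate_eq_append_replicate_iff hba).1
    (h.trans (append_cons u b _))).1
  have hmn := ((append_cons_replicate_eq_append_replicate_iff hba).1
    (h.symm.trans (append_cons v b _))).1
  obtain rfl : m = n := le_antisymm hmn hnm
  exact ⟨append_cancel_right h, rfl⟩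

namespace Language

variable {α : Type*} {l : Language α}

theorem mem_kstar_iff_eq_nil_or_append {w : List α} :
    w ∈ l∗ ↔ w = [] ∨ ∃ u ∈ l∗, ∃ g ∈ l, u ++ g = w := by
  conv_lhs => rw [← one_add_kstar_mul_self_eq_kstar]
  rw [mem_add, mem_one, mem_mul]

theorem append_mem_kstar {u v : List α} (hu : u ∈ l∗) (hv : v ∈ l∗) : u ++ v ∈ l∗ :=
  kstar_mul_kstar l ▸ mem_mul.2 ⟨u, hu, v, hv, rfl⟩

theorem append_mem_kstar_iff {x y : List α} :
    x ++ y ∈ l∗ ↔ ∃ u v, x = u ++ v ∧ u ∈ l∗ ∧ v ++ y ∈ l∗ ∧ (v = [] ∨ ∃ s ∈ l, v <+: s) := by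
  constructor
  · rw [mem_kstar]
    rintro ⟨L, hL, hl⟩
    induction L generalizing x with
    | nil =>
      obtain ⟨rfl, rfl⟩ := List.append_eq_nil_iff.1 hL
      exact ⟨[], [], rfl, nil_mem_kstar l, nil_mem_kstar l, .inl rfl⟩
    | cons s L ih =>
      rw [List.flatten_cons, List.append_eq_append_iff] at hL
      rcases hL with ⟨a, rfl, rfl⟩ | ⟨c, rfl, hc⟩
      · refine ⟨[], x, rfl, nil_mem_kstar l, ?_, .inr ⟨x ++ a, hl _ List.mem_cons_self, ⟨a, rfl⟩⟩⟩
        rw [← List.append_assoc, ← List.flatten_cons]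
        exact join_mem_kstar hl
      · obtain ⟨u, v, rfl, hu, hv, hp⟩ := ih hc.symm fun w hw => hl w (List.mem_cons_of_mem _ hw)
        refine ⟨s ++ u, v, (List.append_assoc ..).symm, ?_, hv, hp⟩
        exact append_mem_kstar (le_kstar (a := l) (hl s List.mem_cons_self)) hu
  · rintro ⟨u, v, rfl, hu, hv, -⟩
    rw [List.append_assoc]
    exact append_mem_kstar hu hv

/-- By `append_mem_kstar_iff`, the left quotient of `l∗` by `x` is determined by the set of
prefixes `v` of words of `l` such that `x = u ++ v` with `u ∈ l∗`. -/
theorem isRegular_kstar_of_finite (hl : Set.Finite l) : l∗.IsRegular := by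
  let P : Set (List α) := {v | v = [] ∨ ∃ s ∈ l, v <+: s}
  have hP : P.Finite := by
    refine ((hl.biUnion fun s _ => s.inits.finite_toSet).insert []).subset ?_
    rintro v (rfl | ⟨s, hs, hv⟩)
    · exact Set.mem_insert _ _
    · exact Set.mem_insert_of_mem _ (Set.mem_biUnion hs ((List.mem_inits v s).2 hv))
  let D : List α → Set (List α) := fun x => {v ∈ P | ∃ u ∈ l∗, x = u ++ v}
  let F : Set (List α) → Language α := fun V => {y | ∃ v ∈ V, v ++ y ∈ l∗}
  have hD : ∀ x, l∗.leftQuotient x = F (D x) := by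
    intro x
    ext y
    rw [mem_leftQuotient, append_mem_kstar_iff]
    constructor
    · rintro ⟨u, v, rfl, hu, hv, hvP⟩
      exact ⟨v, ⟨hvP, u, hu, rfl⟩, hv⟩
    · rintro ⟨v, ⟨hvP, u, hu, rfl⟩, hv⟩
      exact ⟨u, v, rfl, hu, hv, hvP⟩
  refine IsRegular.of_finite_range_leftQuotient ((hP.finite_subsets.image F).subset ?_)
  rintro _ ⟨x, rfl⟩
  exact ⟨D x, fun v hv => hv.1, (hD x).symm⟩

end Language

theorem DFA.ncard_range_leftQuotient_le {α σ : Type*} [Finite σ] (M : DFA α σ) :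
    (Set.range M.accepts.leftQuotient).ncard ≤ Nat.card σ := by
  rw [Language.leftQuotient_accepts, ← Nat.card_coe_set_eq]
  calc Nat.card (Set.range (M.acceptsFrom ∘ M.eval))
      ≤ Nat.card (Set.range M.acceptsFrom) :=
        Nat.card_mono (Set.finite_range _) (Set.range_comp_subset_range _ _)
    _ ≤ Nat.card σ := Finite.card_range_le _

theorem ncard_range_leftQuotient_le_stateComplexity {α : Type} {L : Language α}
    (hL : L.IsRegular) : (Set.range L.leftQuotient).ncard ≤ stateComplexity L := by
  obtain ⟨σ, _, M, hM⟩ := hL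
  obtain ⟨N, hN⟩ : ∃ N : DFA α (Fin (stateComplexity L)), N.accepts = L :=
    Nat.sInf_mem (s := {n | ∃ N : DFA α (Fin n), N.accepts = L})
      ⟨_, M.reindex (Fintype.equivFin σ), by rw [DFA.accepts_reindex, hM]⟩
  simpa [hN] using N.ncard_range_leftQuotient_le

theorem le_stateComplexity_of_injOn {α : Type} {ι : Type*} {L : Language α} (hL : L.IsRegular)
    {s : Set ι} {f : ι → List α} (hf : Set.InjOn (L.leftQuotient ∘ f) s) :
    s.ncard ≤ stateComplexity L :=
  (Set.ncard_le_ncard_of_injOn _ (fun i _ => Set.mem_range_self (f i)) hf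
    hL.finite_range_leftQuotient).trans (ncard_range_leftQuotient_le_stateComplexity hL)

namespace St

open List

variable {t : ℕ}

/-- `S_t`, its word `x i` written as `1^(t-k) 0 1^k` with `k = i + 1`. -/
def code (t : ℕ) : Language (Fin 2) :=
  insert [0] (insert (0 :: replicate (t - 1) 1 ++ [0])
    {w | ∃ k, 0 < k ∧ k < t ∧ w = replicate (t - k) 1 ++ 0 :: replicate k 1})

theorem range_eq_setOf {x : Fin (t - 1) → List (Fin 2)}
    (hx : ∀ i, x i = replicate (t - i.val - 1) 1 ++ [0] ++ replicate (i.val + 1) 1) :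
    Set.range x = {w | ∃ k, 0 < k ∧ k < t ∧ w = replicate (t - k) 1 ++ 0 :: replicate k 1} := by
  ext w
  constructor
  · rintro ⟨i, rfl⟩
    refine ⟨i + 1, by omega, by omega, ?_⟩
    rw [hx, Nat.sub_sub]
    simp
  · rintro ⟨k, hk0, hkt, rfl⟩
    refine ⟨⟨k - 1, by omega⟩, ?_⟩
    rw [hx, show t - (k - 1) - 1 = t - k by omega, show k - 1 + 1 = k by omega]
    simp

theorem append_mem_kstar_code {u g : List (Fin 2)} (hu : u ∈ (code t)∗) (hg : g ∈ code t) :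
    u ++ g ∈ (code t)∗ :=
  Language.append_mem_kstar hu (le_kstar (a := code t) hg)

theorem append_zero_replicate_mem_kstar_iff {v : List (Fin 2)} {k : ℕ} :
    v ++ 0 :: replicate k 1 ∈ (code t)∗ ↔
      (0 < k ∧ k < t ∧ ∃ u ∈ (code t)∗, v = u ++ replicate (t - k) 1) ∨
      (k = 0 ∧ (v ∈ (code t)∗ ∨ ∃ u ∈ (code t)∗, v = u ++ 0 :: replicate (t - 1) 1)) := by
  have h01 : (0 : Fin 2) ≠ 1 := by decide
  constructor
  · intro h
    obtain h | ⟨u, hu, g, hg, hw⟩ := Language.mem_kstar_iff_eq_nil_or_append.1 h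
    · simp at h
    rcases hg with rfl | rfl | ⟨k', hk0, hkt, rfl⟩
    · obtain ⟨rfl, rfl⟩ := (append_cons_replicate_inj (n := 0) h01).1 hw.symm
      exact .inr ⟨rfl, .inl hu⟩
    · rw [show u ++ (0 :: replicate (t - 1) 1 ++ [0])
        = (u ++ 0 :: replicate (t - 1) 1) ++ 0 :: replicate 0 1 by simp] at hw
      obtain ⟨rfl, rfl⟩ := (append_cons_replicate_inj h01).1 hw.symm
      exact .inr ⟨rfl, .inr ⟨u, hu, by simp⟩⟩
    · rw [← append_assoc] at hw
      obtain ⟨rfl, rfl⟩ := (append_cons_replicate_inj h01).1 hw.symm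
      exact .inl ⟨hk0, hkt, u, hu, rfl⟩
  · rintro (⟨hk0, hkt, u, hu, rfl⟩ | ⟨rfl, hv | ⟨u, hu, rfl⟩⟩)
    · rw [append_assoc]
      exact append_mem_kstar_code hu (.inr (.inr ⟨k, hk0, hkt, rfl⟩))
    · exact append_mem_kstar_code hv (.inl rfl)
    · simpa using append_mem_kstar_code hu (.inr (.inl rfl))

def runs (t : ℕ) (v : List (Fin 2)) : Set ℕ := {k | v ++ 0 :: replicate k 1 ∈ (code t)∗}

theorem mem_runs_append {v : List (Fin 2)} {c k : ℕ} :
    k ∈ runs t (v ++ 0 :: replicate c 1) ↔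
      (0 < k ∧ k < t ∧ t ≤ k + c ∧ k + c - t ∈ runs t v) ∨
      (k = 0 ∧ (c ∈ runs t v ∨ (c = t - 1 ∧ v ∈ (code t)∗))) := by
  have h01 : (0 : Fin 2) ≠ 1 := by decide
  simp only [runs, Set.mem_ofPred_eq]
  rw [append_zero_replicate_mem_kstar_iff]
  simp only [append_cons_replicate_eq_append_replicate_iff h01, append_cons_replicate_inj h01]
  refine or_congr (and_congr_right fun _ => and_congr_right fun hkt => ?_)
    (and_congr_right fun _ => or_congr_right ?_)
  · rw [show c - (t - k) = k + c - t by omega, ← Nat.sub_le_iff_le_add']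
    constructor
    · rintro ⟨u, hu, hle, rfl⟩
      exact ⟨hle, hu⟩
    · rintro ⟨hle, hv⟩
      exact ⟨_, hv, hle, rfl⟩
  · constructor
    · rintro ⟨u, hu, rfl, hc⟩
      exact ⟨hc, hu⟩
    · rintro ⟨hc, hv⟩
      exact ⟨v, hv, rfl, hc⟩

theorem runs_nil : runs t [] = {0} := by
  ext k
  rw [Set.mem_singleton_iff, runs, Set.mem_ofPred_eq, append_zero_replicate_mem_kstar_iff]
  refine ⟨?_, fun hk => .inr ⟨hk, .inl (Language.nil_mem_kstar _)⟩⟩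
  rintro (⟨-, hkt, u, -, hu⟩ | ⟨hk, -⟩)
  · have := congrArg length hu
    simp at this
    omega
  · exact hk

def Realizable (t : ℕ) (A : Set ℕ) : Prop := ∃ v ∈ (code t)∗, runs t v = A

theorem realizable_zero : Realizable t {0} := ⟨[], Language.nil_mem_kstar _, runs_nil⟩

theorem realizable_of_mem_runs {v : List (Fin 2)} {c : ℕ} (hc : c ∈ runs t v) :
    Realizable t {k | k = 0 ∨ (0 < k ∧ k < t ∧ t ≤ k + c ∧ k + c - t ∈ runs t v)} := by
  refine ⟨_, hc, Set.ext fun k => ?_⟩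
  rw [mem_runs_append]
  simp only [Set.mem_ofPred_eq]
  tauto

/-- The run set met while the marker walks down the full cycle towards its final position `0`:
it stands at `h`, has kept the points `A` above `h` and has not yet touched `[0, h)`; positions are
measured from the final marker. -/
def walkState (t : ℕ) (A : Set ℕ) (h : ℕ) : Set ℕ :=
  {q | q = 0 ∨ (q < t ∧ (q + h ∈ A ∨ t ≤ q + h))}

theorem Realizable.walkState_insert {A : Set ℕ} {a h : ℕ} (hA : Realizable t (walkState t A h))
    (hah : a < h) (hht : h < t) (hAh : ∀ b ∈ A, h < b) :
    Realizable t (walkState t (insert h A) a) := by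
  obtain ⟨v, -, hv⟩ := hA
  have hc : t - (h - a) ∈ runs t v := by
    rw [hv]
    exact .inr ⟨by omega, .inr (by omega)⟩
  convert realizable_of_mem_runs hc using 1
  ext k
  simp only [walkState, hv, Set.mem_ofPred_eq, Set.mem_insert_iff]
  have := hAh (k + a)
  grind

theorem Realizable.walkState_insert_union (s : Finset ℕ) {A : Set ℕ} {h : ℕ}
    (hA : Realizable t (walkState t A h)) (h0 : 0 < h) (hht : h < t)
    (hs : ∀ x ∈ s, 0 < x ∧ x < h) (hAh : ∀ a ∈ A, h < a) :
    Realizable t (walkState t (insert h A ∪ s) 0) := by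
  induction s using Finset.induction_on_max generalizing A h with
  | empty => simpa using hA.walkState_insert h0 hht hAh
  | insert a s has ih =>
    obtain ⟨ha0, hah⟩ := hs a (Finset.mem_insert_self a s)
    have := ih (hA.walkState_insert hah hht hAh) ha0 (by omega)
      (fun x hx => ⟨(hs x (Finset.mem_insert_of_mem hx)).1, has x hx⟩)
      (by rintro b (rfl | hb); exacts [hah, (hAh b hb).trans' hah])
    convert this using 2
    ext b
    simp only [Set.mem_union, Set.mem_insert_iff, Finset.coe_insert]
    tauto

theorem realizable_Iic {r : ℕ} (hr : r < t) : Realizable t {k | k ≤ r} := by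
  induction r with
  | zero => simpa using realizable_zero
  | succ r ih =>
    obtain ⟨v, hv, hvr⟩ := ih (by omega)
    have hgrow : runs t (v ++ 0 :: replicate (t - 1) 1) = {k | k ≤ r + 1} := by
      ext k
      simp only [mem_runs_append, hvr, hv, Set.mem_ofPred_eq, and_self, or_true, and_true]
      omega
    have hjump : Realizable t (walkState t ∅ (r + 1)) := by
      have hmax : r + 1 ∈ runs t (v ++ 0 :: replicate (t - 1) 1) := by
        rw [hgrow]
        exact le_refl (r + 1)
      convert realizable_of_mem_runs hmax using 1
      ext k
      simp only [walkState, hgrow, Set.mem_ofPred_eq, Set.mem_empty_iff_false, false_or]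
      omega
    convert hjump.walkState_insert_union (Finset.Icc 1 r) (by omega) hr (by simp; omega) (by simp)
      using 1
    ext k
    simp only [Set.mem_ofPred_eq, walkState, insert_empty_eq, Finset.coe_Icc,
      Set.singleton_union, add_zero, Set.mem_insert_iff, Set.mem_Icc]
    omega

theorem exists_runs_eq_on_Icc (ht : 2 ≤ t) {D : Finset ℕ} (hD : D ⊆ Finset.Icc 1 (t - 2)) :
    ∃ v, ∀ d ∈ Finset.Icc 1 (t - 2), d ∈ runs t v ↔ d ∈ D := by
  have hfull : Realizable t (walkState t ∅ (t - 1)) := by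
    convert realizable_Iic (t := t) (r := t - 1) (by omega) using 1
    ext k
    simp only [walkState, Set.mem_ofPred_eq, Set.mem_empty_iff_false, false_or]
    omega
  obtain ⟨v, -, hv⟩ := hfull.walkState_insert_union D (by omega) (by omega)
    (fun x hx => by have := Finset.mem_Icc.1 (hD hx); omega) (by simp)
  refine ⟨v, fun d hd => ?_⟩
  rw [Finset.mem_Icc] at hd
  rw [hv]
  simp only [walkState, Set.mem_ofPred_eq, Set.mem_union, Set.mem_insert_iff,
    Set.mem_empty_iff_false, or_false, Finset.mem_coe, add_zero]
  grind

theorem mem_runs_iff_mem_leftQuotient {v : List (Fin 2)} {k : ℕ} :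
    k ∈ runs t v ↔ replicate k 1 ∈ (code t)∗.leftQuotient (v ++ [0]) := by
  rw [Language.mem_leftQuotient, append_assoc]
  rfl

theorem exists_injOn_leftQuotient (ht : 2 ≤ t) :
    ∃ f : Finset ℕ → List (Fin 2),
      Set.InjOn ((code t)∗.leftQuotient ∘ f) (Finset.Icc 1 (t - 2)).powerset := by
  choose! v hv using fun D (hD : D ∈ (Finset.Icc 1 (t - 2)).powerset) =>
    exists_runs_eq_on_Icc ht (Finset.mem_powerset.1 hD)
  refine ⟨fun D => v D ++ [0], fun D₁ hD₁ D₂ hD₂ h => ?_⟩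
  have hruns : runs t (v D₁) = runs t (v D₂) := by
    ext k
    rw [mem_runs_iff_mem_leftQuotient, mem_runs_iff_mem_leftQuotient]
    exact Set.ext_iff.1 h _
  ext d
  by_cases hd : d ∈ Finset.Icc 1 (t - 2)
  · rw [← hv D₁ hD₁ d hd, ← hv D₂ hD₂ d hd, hruns]
  · exact iff_of_false (fun h => hd (Finset.mem_powerset.1 hD₁ h))
      (fun h => hd (Finset.mem_powerset.1 hD₂ h))

end St

/-- For `t ≥ 2`, with `y = 0 1^{t−1} 0`, `x i = 1^{t−i−1} 0 1^{i+1}` for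
`0 ≤ i ≤ t−2`, and `S t = {0, x 0, …, x (t−2), y}`, the state complexity of `S t∗` is at
least `2^{t−2}`. -/
theorem sc_St_lower_bound (t : ℕ) (ht : 2 ≤ t)
    (y : List (Fin 2)) (hy : y = [0] ++ List.replicate (t - 1) 1 ++ [0])
    (x : Fin (t - 1) → List (Fin 2))
    (hx : ∀ i, x i = List.replicate (t - i.val - 1) 1 ++ [0] ++ List.replicate (i.val + 1) 1)
    (S : Language (Fin 2)) (hS : S = insert [(0 : Fin 2)] (insert y (Set.range x))) :
    2 ^ (t - 2) ≤ stateComplexity (S∗) := by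
  have hreg : S∗.IsRegular :=
    Language.isRegular_kstar_of_finite (hS ▸ ((Set.finite_range x).insert y).insert _)
  have hcode : S = St.code t := by
    rw [hS, St.code, hy, St.range_eq_setOf hx]
    rfl
  subst hcode
  obtain ⟨f, hf⟩ := St.exists_injOn_leftQuotient ht
  calc 2 ^ (t - 2) = ((Finset.Icc 1 (t - 2)).powerset : Set (Finset ℕ)).ncard := by
        rw [Set.ncard_coe_finset, Finset.card_powerset, Nat.card_Icc, Nat.add_sub_cancel]
    _ ≤ stateComplexity ((St.code t)∗) := le_stateComplexity_of_injOn hreg hf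
end

section
/- Let S be a finite set of nonempty words over Σ such that S* is co-finite in Σ* and S* ≠ Σ*. Then for every x ∈ S there exists x' ∈ S such that x is a proper prefix of x' or x' is a proper prefix of x; similarly, for every x ∈ S there exists x' ∈ S such that x is a proper suffix of x' or x' is a proper suffix of x. -/
/-!
If a nonempty word `x` is prefix-comparable with no word of `S` other than itself,
every factorisation of `x ++ u` into words of `S` must start with `x`, so `x ++ u ∈ S∗`
forces `u ∈ S∗`. Starting from some `u ∉ S∗`, the words `xᵏu` are then infinitely many
words outside `S∗`. Suffixes follow by reversing every word.
-/

open Computability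

namespace Language

variable {α : Type*} {l : Language α} {x : List α}

theorem mem_kstar_of_append_mem_kstar (hx : x ≠ [])
    (hcomp : ∀ y ∈ l, x <+: y ∨ y <+: x → y = x) {u : List α} (h : x ++ u ∈ l∗) :
    u ∈ l∗ := by
  obtain ⟨_ | ⟨y, L⟩, hL, hmem⟩ := mem_kstar.mp h
  · exact absurd (List.append_eq_nil_iff.mp hL).1 hx
  · rw [List.flatten_cons] at hL
    have hyx : y = x := hcomp y (hmem y List.mem_cons_self)
      (List.prefix_or_prefix_of_prefix (List.prefix_append x u) ⟨_, hL.symm⟩)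
    subst hyx
    exact mem_kstar.mpr
      ⟨L, List.append_cancel_left hL, fun z hz => hmem z (List.mem_cons_of_mem _ hz)⟩

theorem infinite_compl_kstar_of_prefix_comparable_eq (hx : x ≠ [])
    (hcomp : ∀ y ∈ l, x <+: y ∨ y <+: x → y = x) (hl : (l∗ : Language α) ≠ Set.univ) :
    ((l∗ : Language α)ᶜ : Set (List α)).Infinite := by
  obtain ⟨u, hu⟩ := (Set.ne_univ_iff_exists_notMem _).mp hl
  let f : ℕ → List α := fun k => (List.replicate k x).flatten ++ u
  have hf : ∀ k, f k ∉ l∗ := by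
    intro k
    induction k with
    | zero => exact hu
    | succ k ih =>
      intro h
      refine ih (mem_kstar_of_append_mem_kstar hx hcomp ?_)
      simpa [f, List.replicate_succ] using h
  have hinj : Function.Injective f := by
    intro a b hab
    have hlen := congrArg List.length hab
    simp only [f, List.length_append, List.length_flatten, List.map_replicate,
      List.sum_replicate, smul_eq_mul] at hlen
    exact Nat.eq_of_mul_eq_mul_right (List.length_pos_iff.mpr hx) (by omega)
  exact (Set.infinite_range_of_injective hinj).mono (Set.range_subset_iff.mpr hf)

theorem exists_proper_prefix_of_finite_compl_kstar (hx : x ≠ [])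
    (hcof : ((l∗ : Language α)ᶜ : Set (List α)).Finite)
    (hl : (l∗ : Language α) ≠ Set.univ) :
    ∃ x' ∈ l, (x <+: x' ∧ x ≠ x') ∨ (x' <+: x ∧ x' ≠ x) := by
  by_contra! h
  refine infinite_compl_kstar_of_prefix_comparable_eq hx (fun y hy hxy => ?_) hl hcof
  exact hxy.elim (fun h' => ((h y hy).1 h').symm) (h y hy).2

theorem exists_proper_suffix_of_finite_compl_kstar (hx : x ≠ [])
    (hcof : ((l∗ : Language α)ᶜ : Set (List α)).Finite)
    (hl : (l∗ : Language α) ≠ Set.univ) :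
    ∃ x' ∈ l, (x <:+ x' ∧ x ≠ x') ∨ (x' <:+ x ∧ x' ≠ x) := by
  have hcof' : ((l.reverse∗ : Language α)ᶜ : Set (List α)).Finite := by
    rw [← reverse_kstar]
    exact hcof.preimage List.reverse_injective.injOn
  have hl' : (l.reverse∗ : Language α) ≠ Set.univ := by
    rw [← reverse_kstar]
    obtain ⟨u, hu⟩ := (Set.ne_univ_iff_exists_notMem _).mp hl
    exact (Set.ne_univ_iff_exists_notMem _).mpr
      ⟨u.reverse, fun h => hu (reverse_mem_reverse.mp h)⟩
  obtain ⟨y, hy, h⟩ :=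
    exists_proper_prefix_of_finite_compl_kstar (List.reverse_ne_nil_iff.mpr hx) hcof' hl'
  obtain ⟨z, rfl⟩ := List.reverse_surjective y
  refine ⟨z, reverse_mem_reverse.mp hy, ?_⟩
  simpa [List.reverse_prefix] using h

end Language

theorem proper_prefix_suffix_of_cofinite_general {α : Type} (S : Language α)
    (hne : ∀ w ∈ S, w ≠ [])
    (hcof : Set.Finite ((S∗ : Language α)ᶜ))
    (hproper : (S∗ : Language α) ≠ (Set.univ : Set (List α))) :
    ∀ x ∈ S,
      (∃ x' ∈ S, (x <+: x' ∧ x ≠ x') ∨ (x' <+: x ∧ x' ≠ x)) ∧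
      (∃ x' ∈ S, (x <:+ x' ∧ x ≠ x') ∨ (x' <:+ x ∧ x' ≠ x)) := fun x hx =>
  ⟨Language.exists_proper_prefix_of_finite_compl_kstar (hne x hx) hcof hproper,
    Language.exists_proper_suffix_of_finite_compl_kstar (hne x hx) hcof hproper⟩

/-- If `S` is a finite set of nonempty words with `S∗` co-finite and
`S∗ ≠ Σ∗`, then every `x ∈ S` is a proper prefix of some `x' ∈ S` or vice versa, and
likewise for suffixes. -/
theorem proper_prefix_suffix_of_cofinite {α : Type} (S : Language α)
    (hfin : S.Finite) (hne : ∀ w ∈ S, w ≠ [])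
    (hcof : Set.Finite ((S∗ : Language α)ᶜ))
    (hproper : (S∗ : Language α) ≠ (Set.univ : Set (List α))) :
    ∀ x ∈ S,
      (∃ x' ∈ S, (x <+: x' ∧ x ≠ x') ∨ (x' <+: x ∧ x' ≠ x)) ∧
      (∃ x' ∈ S, (x <:+ x' ∧ x ≠ x') ∨ (x' <:+ x ∧ x' ≠ x)) :=
  proper_prefix_suffix_of_cofinite_general S hne hcof hproper
end

section
/- Let 0 < m < n and let S ⊆ Σ^m ∪ Σ^n be a set of words each of length m or n, over any finite alphabet Σ. If S* is co-finite, then every word of length m belongs to S, i.e., Σ^m ⊆ S. -/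
/-!
Suppose `w` has length `m` but `w ∉ S`, and pad it by a word `u` of length `n - m`. In any
factorisation of a word `w ++ u ++ x` into elements of `S`, the first factor is a prefix of length
`m` or `n`; the former would be `w` itself, so it is `w ++ u` and `x ∈ S∗`. Since also `w ∉ S∗`,
none of the words `(w ++ u)ᵏ ++ w`, of pairwise distinct lengths `k * n + m`, lies in `S∗`.
-/

open Computability

namespace Language

variable {α : Type*} {S : Language α}

theorem eq_nil_or_exists_append_of_mem_kstar {x : List α} (hx : x ∈ S∗) :
    x = [] ∨ ∃ s ∈ S, ∃ r ∈ S∗, s ++ r = x := by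
  rwa [← one_add_self_mul_kstar_eq_kstar, mem_add, mem_one, mem_mul] at hx

section TwoLengths

variable {m n : ℕ} (hS : ∀ s ∈ S, s.length = m ∨ s.length = n) {w : List α}
  (hw : w.length = m) (hwS : w ∉ S)
include hS hw hwS

theorem notMem_kstar_of_length_eq (hm : 0 < m) (hmn : m < n) : w ∉ S∗ := by
  intro hwS'
  rcases eq_nil_or_exists_append_of_mem_kstar hwS' with rfl | ⟨s, hs, r, -, rfl⟩
  · simp only [List.length_nil] at hw; omega
  have hr : r = [] := by
    rcases hS s hs with hsm | hsn
    · simpa [hsm] using hw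
    · simp only [List.length_append] at hw; omega
  exact hwS (by simpa [hr] using hs)

theorem mem_kstar_of_append_mem_kstar_s8 {u x : List α} (hu : (w ++ u).length = n)
    (hx : w ++ u ++ x ∈ S∗) : x ∈ S∗ := by
  rcases eq_nil_or_exists_append_of_mem_kstar hx with hnil | ⟨s, hs, r, hr, hsr⟩
  · exact (List.append_eq_nil_iff.mp hnil).2 ▸ nil_mem_kstar S
  rcases hS s hs with hsm | hsn
  · rw [List.append_assoc] at hsr
    exact absurd ((List.append_inj hsr (by rw [hsm, hw])).1 ▸ hs) hwS
  · exact (List.append_inj hsr (by rw [hsn, hu])).2 ▸ hr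

theorem infinite_compl_kstar (hm : 0 < m) (hmn : m < n) : (S∗)ᶜ.Infinite := by
  have hne : w ≠ [] := by rintro rfl; simp only [List.length_nil] at hw; omega
  set p := w ++ List.replicate (n - m) (w.head hne)
  have hp : p.length = n := by simp only [p, List.length_append, List.length_replicate, hw]; omega
  let g : ℕ → List α := fun k => (List.replicate k p).flatten ++ w
  have hg_succ (k : ℕ) : g (k + 1) = p ++ g k := by simp [g, List.replicate_succ]
  have hg_len (k : ℕ) : (g k).length = k * n + m := by
    simp [g, List.length_flatten, hp, hw]
  have hg_notMem (k : ℕ) : g k ∉ S∗ := by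
    induction k with
    | zero => simpa [g] using notMem_kstar_of_length_eq hS hw hwS hm hmn
    | succ k ih => exact fun h => ih (mem_kstar_of_append_mem_kstar_s8 hS hw hwS hp (hg_succ k ▸ h))
  refine Set.infinite_of_injective_forall_mem (fun i j hij => ?_) hg_notMem
  have := congrArg List.length hij
  rw [hg_len, hg_len] at this
  exact Nat.eq_of_mul_eq_mul_right (by omega : 0 < n) (by omega)

end TwoLengths

end Language

theorem full_length_m_of_cofinite_general {α : Type} (m n : ℕ) (hm : 0 < m) (hmn : m < n)
    (S : Language α) (hS : ∀ w ∈ S, w.length = m ∨ w.length = n)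
    (hcof : Set.Finite ((S∗ : Language α)ᶜ)) :
    ∀ w : List α, w.length = m → w ∈ S := fun w hw => by
  by_contra hwS
  exact Language.infinite_compl_kstar hS hw hwS hm hmn hcof

/-- If `0 < m < n`, `S ⊆ Σ^m ∪ Σ^n`, and `S∗` is co-finite, then
`Σ^m ⊆ S`. -/
theorem full_length_m_of_cofinite {α : Type} [Fintype α] (m n : ℕ) (hm : 0 < m) (hmn : m < n)
    (S : Language α) (hS : ∀ w ∈ S, w.length = m ∨ w.length = n)
    (hcof : Set.Finite ((S∗ : Language α)ᶜ)) :
    ∀ w : List α, w.length = m → w ∈ S :=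
  full_length_m_of_cofinite_general m n hm hmn S hS hcof
end

section
/- Let 0 < m < n < 2m, let Σ be a finite alphabet, and let S ⊆ Σ^m ∪ Σ^n be such that S* is co-finite. Then every word of length l = m·|Σ|^{n−m} + (n−m) belongs to S*, i.e., Σ^l ⊆ S*. -/
open Computability

/-!
Once all long words lie in `S∗`, every word `v` of length `m` lies in `S`: otherwise the words
`(v x)ᵗ v` with `|v x| = n` are never in `S∗`, their only possible first factors being `v` and
`v x`. Hence `w` is in `S∗` as soon as one of its length-`n` factors starting at a position
divisible by `m` lies in `S`. If none does, pigeonhole on the `|Σ|^(n-m) + 1` windows of length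
`n - m` at positions `0, m, …, m·|Σ|^(n-m)` finds two equal ones, and the segment of `w` between
them pumps to arbitrarily long words whose `m`-aligned `n`-factors are all factors of `w`. A
factorisation of such a word into `S` can only use words of length `m`, contradicting
`m ∤ t·|segment| + (n - m)`.
-/

variable {α : Type*}

lemma exists_forall_length_le_mem_of_finite_compl {L : Language α}
    (h : Set.Finite (Lᶜ : Language α)) : ∃ N, ∀ y : List α, N ≤ y.length → y ∈ L := by
  obtain ⟨N, hN⟩ := (h.image List.length).bddAbove
  refine ⟨N + 1, fun y hy => by_contra fun hyL => ?_⟩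
  have := hN ⟨y, hyL, rfl⟩
  omega

lemma exists_lt_le_drop_take_eq [Fintype α] (w : List α) (m k : ℕ)
    (hw : m * Fintype.card α ^ k + k ≤ w.length) :
    ∃ i j, i < j ∧ j ≤ Fintype.card α ^ k ∧
      (w.drop (j * m)).take k = (w.drop (i * m)).take k := by
  set Q := Fintype.card α ^ k
  let window : Fin (Q + 1) → List.Vector α k := fun i =>
    ⟨(w.drop (i * m)).take k, by
      have := Nat.mul_le_mul_right m (Nat.lt_succ_iff.1 i.isLt)
      rw [List.length_take, List.length_drop]
      rw [Nat.mul_comm] at hw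
      omega⟩
  obtain ⟨i, j, hne, heq⟩ := Fintype.exists_ne_map_eq_of_card_lt window (by simp [Q])
  have heq' := congrArg List.Vector.toList heq
  rcases Fin.lt_or_lt_of_ne hne with h | h
  · exact ⟨i, j, h, Nat.lt_succ_iff.1 j.isLt, heq'.symm⟩
  · exact ⟨j, i, h, Nat.lt_succ_iff.1 i.isLt, heq'⟩

section Kstar

variable {S : Language α}

lemma eq_nil_or_exists_append_of_mem_kstar {y : List α} (hy : y ∈ S∗) :
    y = [] ∨ ∃ B ∈ S, ∃ z ∈ S∗, B ++ z = y := by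
  rwa [← Language.one_add_self_mul_kstar_eq_kstar, Language.mem_add, Language.mem_one,
    Language.mem_mul] at hy

lemma append_mem_kstar {x y : List α} (hx : x ∈ S∗) (hy : y ∈ S∗) : x ++ y ∈ S∗ :=
  kstar_mul_kstar S ▸ Language.append_mem_mul hx hy

lemma mem_kstar_of_dvd_length {m : ℕ} (hS : ∀ v : List α, v.length = m → v ∈ S) :
    ∀ y : List α, m ∣ y.length → y ∈ S∗ := by
  rintro y ⟨j, hj⟩
  induction j generalizing y with
  | zero => simp_all [Language.nil_mem_kstar]
  | succ j ih =>
    rw [← List.take_append_drop m y]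
    refine append_mem_kstar (le_kstar (α := Language α) (hS _ ?_)) (ih _ ?_)
    · rw [List.length_take, hj, Nat.mul_succ]; omega
    · rw [List.length_drop, hj, Nat.mul_succ]; omega

lemma flatten_replicate_append_not_mem_kstar {m n : ℕ}
    (hS : ∀ B ∈ S, B.length = m ∨ B.length = n) (hmn : m ≤ n) {v x : List α}
    (hv : v.length = m) (hv0 : v ≠ []) (hvS : v ∉ S) (hx : (v ++ x).length = n) (t : ℕ) :
    (List.replicate t (v ++ x)).flatten ++ v ∉ S∗ := by
  induction t with
  | zero =>
    intro hmem
    rcases eq_nil_or_exists_append_of_mem_kstar hmem with h | ⟨B, hB, z, -, hBz⟩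
    · exact hv0 (by simpa using h)
    · rw [List.replicate_zero, List.flatten_nil, List.nil_append] at hBz
      have hz : z = [] := by
        have := congrArg List.length hBz
        rw [List.length_append] at this
        exact List.eq_nil_of_length_eq_zero (by rcases hS B hB with h | h <;> omega)
      rw [hz, List.append_nil] at hBz
      exact hvS (hBz ▸ hB)
  | succ t ih =>
    intro hmem
    rw [List.replicate_succ, List.flatten_cons, List.append_assoc] at hmem
    rcases eq_nil_or_exists_append_of_mem_kstar hmem with h | ⟨B, hB, z, hz, hBz⟩
    · exact hv0 (by simp_all)
    · rcases hS B hB with hBm | hBn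
      · rw [List.append_assoc] at hBz
        exact hvS ((List.append_inj hBz (by rw [hBm, hv])).1 ▸ hB)
      · exact ih ((List.append_inj hBz (by rw [hBn, hx])).2 ▸ hz)

lemma mem_of_length_eq_of_forall_length_le_mem_kstar {m n N : ℕ}
    (hS : ∀ B ∈ S, B.length = m ∨ B.length = n) (hm : 0 < m) (hmn : m ≤ n)
    (hN : ∀ y : List α, N ≤ y.length → y ∈ S∗) (v : List α) (hv : v.length = m) :
    v ∈ S := by
  by_contra hvS
  obtain ⟨c, v', rfl⟩ := List.exists_cons_of_length_pos (hv ▸ hm)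
  have hx : (c :: v' ++ List.replicate (n - m) c).length = n := by simp at hv ⊢; omega
  refine flatten_replicate_append_not_mem_kstar hS hmn hv (List.cons_ne_nil _ _) hvS hx N
    (hN _ ?_)
  simp only [List.length_append, List.length_flatten, List.map_replicate, List.sum_replicate,
    hx, hv, smul_eq_mul]
  nlinarith

end Kstar

def alignedFactors (m n : ℕ) (y : List α) : Set (List α) :=
  {B | ∃ p, m ∣ p ∧ p + n ≤ y.length ∧ (y.drop p).take n = B}

section AlignedFactors

variable {m n : ℕ}

lemma alignedFactors_take_subset (y : List α) (l : ℕ) :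
    alignedFactors m n (y.take l) ⊆ alignedFactors m n y := by
  rintro _ ⟨p, hp, hpn, rfl⟩
  rw [List.length_take] at hpn
  refine ⟨p, hp, by omega, ?_⟩
  rw [List.drop_take, List.take_take, min_eq_left (by omega)]

lemma alignedFactors_subset_append {A : List α} (hA : m ∣ A.length) (Z : List α) :
    alignedFactors m n Z ⊆ alignedFactors m n (A ++ Z) := by
  rintro _ ⟨p, hp, hpn, rfl⟩
  refine ⟨A.length + p, dvd_add hA hp, by simp; omega, ?_⟩
  rw [← List.drop_drop, List.drop_left]

lemma alignedFactors_append_subset {A : List α} (hA : m ∣ A.length) {k : ℕ} (hn : n ≤ m + k)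
    (Z : List α) :
    alignedFactors m n (A ++ Z) ⊆
      alignedFactors m n (A ++ Z.take k) ∪ alignedFactors m n Z := by
  rintro _ ⟨p, hp, hpn, rfl⟩
  rw [List.length_append] at hpn
  rcases lt_or_ge p A.length with hpA | hpA
  · left
    have hpmA : p + m ≤ A.length := by
      obtain ⟨a, ha⟩ := hA
      obtain ⟨r, rfl⟩ := hp
      have : r < a := by rw [ha] at hpA; exact Nat.lt_of_mul_lt_mul_left hpA
      rw [ha, ← Nat.mul_succ]
      exact Nat.mul_le_mul_left m this
    refine ⟨p, hp, by simp; omega, ?_⟩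
    rw [List.take_drop, List.take_drop, List.take_append, List.take_append, List.take_take,
      min_eq_left (by omega)]
  · right
    refine ⟨p - A.length, Nat.dvd_sub hp hA, by omega, ?_⟩
    rw [List.drop_append, List.drop_eq_nil_of_le hpA, List.nil_append]

lemma dvd_length_of_mem_kstar {S : Language α} (hS : ∀ B ∈ S, B.length = m ∨ B.length = n)
    {y : List α} (hy : y ∈ S∗) (hyS : ∀ B ∈ alignedFactors m n y, B ∉ S) :
    m ∣ y.length := by
  obtain ⟨L, rfl, hL⟩ := Language.mem_kstar.1 hy
  clear hy
  induction L with
  | nil => simp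
  | cons B L ih =>
    have hBS := hL B List.mem_cons_self
    rw [List.flatten_cons] at hyS ⊢
    rcases hS B hBS with hB | hB
    · rw [List.length_append, hB]
      refine dvd_add dvd_rfl (ih (fun C hC => hL C (List.mem_cons_of_mem _ hC)) fun C hC => ?_)
      exact hyS C (alignedFactors_subset_append (hB ▸ dvd_rfl) _ hC)
    · exact absurd hBS (hyS B ⟨0, dvd_zero m, by simp [hB], by simp [List.take_left' hB]⟩)

lemma mem_kstar_of_mem_alignedFactors {S : Language α}
    (hS : ∀ v : List α, v.length = m → v ∈ S) {y : List α} (hy : m ∣ y.length - n)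
    {B : List α} (hB : B ∈ alignedFactors m n y) (hBS : B ∈ S) : y ∈ S∗ := by
  obtain ⟨p, hp, hpn, rfl⟩ := hB
  rw [← List.take_append_drop p y, ← List.take_append_drop n (y.drop p)]
  refine append_mem_kstar (mem_kstar_of_dvd_length hS _ ?_)
    (append_mem_kstar (le_kstar (α := Language α) hBS) (mem_kstar_of_dvd_length hS _ ?_))
  · rwa [List.length_take, min_eq_left (by omega)]
  · rw [List.length_drop, List.length_drop, Nat.sub_sub, Nat.add_comm, ← Nat.sub_sub]
    exact Nat.dvd_sub hy hp

lemma alignedFactors_flatten_replicate_append_take_subset {M : List α} (hM : m ∣ M.length)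
    {k : ℕ} (hk : k ≤ M.length) (hn : n ≤ m + k) (t : ℕ) :
    alignedFactors m n ((List.replicate t M).flatten ++ M.take k) ⊆
      alignedFactors m n (M ++ M.take k) := by
  induction t with
  | zero =>
    have := alignedFactors_take_subset (m := m) (n := n) (M ++ M.take k) k
    rw [List.take_append_of_le_length hk] at this
    simpa using this
  | succ t ih =>
    have hprefix : ((List.replicate t M).flatten ++ M.take k).take k = M.take k := by
      cases t with
      | zero => simp
      | succ t =>
        rw [List.replicate_succ, List.flatten_cons, List.append_assoc,
          List.take_append_of_le_length hk]
    rw [List.replicate_succ, List.flatten_cons, List.append_assoc]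
    exact (alignedFactors_append_subset hM hn _).trans (Set.union_subset (by rw [hprefix]) ih)

lemma exists_length_eq_alignedFactors_subset_of_take_drop_eq {X : List α} {p k : ℕ}
    (hp : m ∣ p) (hkp : k ≤ p) (hX : p + k ≤ X.length) (hwin : (X.drop p).take k = X.take k)
    (hn : n ≤ m + k) (t : ℕ) :
    ∃ y : List α, y.length = t * p + k ∧ alignedFactors m n y ⊆ alignedFactors m n X := by
  set M := X.take p
  have hM : M.length = p := List.length_take_of_le (by omega)
  have hMM : M ++ M.take k = X.take (p + k) := by
    rw [List.take_add, hwin, List.take_take, min_eq_left hkp]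
  refine ⟨(List.replicate t M).flatten ++ M.take k, by simp [hM]; omega, ?_⟩
  calc alignedFactors m n ((List.replicate t M).flatten ++ M.take k)
      ⊆ alignedFactors m n (M ++ M.take k) :=
        alignedFactors_flatten_replicate_append_take_subset (hM ▸ hp) (hM ▸ hkp) hn t
    _ ⊆ alignedFactors m n X := hMM ▸ alignedFactors_take_subset X (p + k)

lemma exists_long_alignedFactors_subset [Fintype α] {k : ℕ} (hk : 0 < k) (hkm : k < m)
    (hn : n ≤ m + k) (w : List α) (hw : m * Fintype.card α ^ k + k ≤ w.length) (N : ℕ) :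
    ∃ y : List α, N ≤ y.length ∧ ¬ m ∣ y.length ∧
      alignedFactors m n y ⊆ alignedFactors m n w := by
  obtain ⟨i, j, hij, hjQ, hwin⟩ := exists_lt_le_drop_take_eq w m k hw
  have hjm : j * m ≤ m * Fintype.card α ^ k := by
    rw [Nat.mul_comm m]; exact Nat.mul_le_mul_right m hjQ
  have hji : i * m + (j - i) * m = j * m := by rw [← Nat.add_mul, Nat.add_sub_cancel' hij.le]
  have hm_le : m ≤ (j - i) * m := Nat.le_mul_of_pos_left m (by omega)
  obtain ⟨y, hy, hyw⟩ := exists_length_eq_alignedFactors_subset_of_take_drop_eq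
    (X := w.drop (i * m)) (p := (j - i) * m) (dvd_mul_left m _) (by omega)
    (by rw [List.length_drop]; omega) (by rw [List.drop_drop, hji, hwin]) hn N
  refine ⟨y, ?_, fun hdvd => ?_, ?_⟩
  · rw [hy]; nlinarith
  · rw [hy] at hdvd
    have := Nat.le_of_dvd hk ((Nat.dvd_add_right (Dvd.dvd.mul_left (dvd_mul_left m _) N)).1 hdvd)
    omega
  · have hwi := alignedFactors_subset_append (m := m) (n := n) (A := w.take (i * m))
      (by rw [List.length_take_of_le (by omega)]; exact dvd_mul_left m i) (w.drop (i * m))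
    rw [List.take_append_drop] at hwi
    exact hyw.trans hwi

end AlignedFactors

/-- If `0 < m < n < 2m`, `S ⊆ Σ^m ∪ Σ^n`, and `S∗` is co-finite, then every
word of length `l = m·|Σ|^{n−m} + (n−m)` belongs to `S∗`. -/
theorem full_length_l_of_cofinite {α : Type} [Fintype α] (m n : ℕ)
    (hm : 0 < m) (hmn : m < n) (hn2m : n < 2 * m)
    (S : Language α) (hS : ∀ w ∈ S, w.length = m ∨ w.length = n)
    (hcof : Set.Finite ((S∗ : Language α)ᶜ)) :
    ∀ w : List α, w.length = m * Fintype.card α ^ (n - m) + (n - m) → w ∈ S∗ := by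
  intro w hw
  obtain ⟨N, hN⟩ := exists_forall_length_le_mem_of_finite_compl hcof
  have hSm := mem_of_length_eq_of_forall_length_le_mem_kstar hS hm hmn.le hN
  have hw_dvd : m ∣ w.length - n :=
    ⟨Fintype.card α ^ (n - m) - 1, by rw [hw, Nat.mul_sub_one]; omega⟩
  by_contra hwS
  obtain ⟨y, hNy, hy_dvd, hyw⟩ :=
    exists_long_alignedFactors_subset (n := n) (k := n - m) (by omega) (by omega) (by omega) w
      hw.ge N
  refine hy_dvd (dvd_length_of_mem_kstar hS (hN y hNy) fun B hB hBS => ?_)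
  exact hwS (mem_kstar_of_mem_alignedFactors hSm hw_dvd (hyw hB) hBS)
end

section
/- Let 0 < m < n < 2m with gcd(m, n) = 1, and let S ⊆ Σ^m ∪ Σ^n. Then S* is co-finite if and only if Σ^m ⊆ S and Σ^l ⊆ S*, where l = m·|Σ|^{n−m} + (n−m). -/
open Computability

/-!
Put `r = n - m`, so `0 < r < m` and `gcd(m, r) = 1`. An `S`-factorisation uses pieces of lengths
`m` and `m + r`; if the length of the word is not a multiple of `m`, a piece of length `m + r`
occurs, and the first one starts at a multiple of `m`.

If `w ∈ Σ^m` is not in `S`, then no word `(w s)^k w` with `|s| = r` is in `S*`, since its first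
piece could only be `w s`. For `x ∈ Σ^l`, two of the `|Σ|^r + 1` windows of length `r` at the
positions `0, m, …, m |Σ|^r` agree, so `x = A B C` with `m ∣ |A|, |B|`, `B ≠ ε`, and `B`, `C`
beginning with the same `r` letters. Deleting a copy of `B` from `A B^(k+1) C ∈ S*` stays in `S*`:
the first long piece either lies within the common prefix of `A B^k C` and `A B^(k+1) C`, or starts
after the first copy of `B`, and the rest is cut into blocks of length `m`. Cofiniteness puts
`A B^k C` in `S*` for large `k`, hence `x = A B C` as well.

Conversely `Σ^m ⊆ S` and `Σ^l ⊆ S*` put every word whose length is a combination of `m` and `l`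
in `S*`, and `gcd(m, l) = gcd(m, r) = 1`.
-/

namespace Language

variable {α : Type*} {S : Language α}

theorem append_mem_kstar_s11 {x y : List α} (hx : x ∈ S∗) (hy : y ∈ S∗) : x ++ y ∈ S∗ :=
  kstar_mul_kstar S ▸ append_mem_mul hx hy

theorem mem_kstar_of_dvd_length {d : ℕ} (hd : ∀ w : List α, w.length = d → w ∈ S∗)
    {u : List α} (hu : d ∣ u.length) : u ∈ S∗ := by
  obtain ⟨k, hk⟩ := hu
  induction k generalizing u with
  | zero => simp_all [nil_mem_kstar]
  | succ k ih =>
    rw [Nat.mul_succ] at hk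
    rw [← List.take_append_drop d u]
    exact append_mem_kstar_s11 (hd _ (by simp only [List.length_take]; omega))
      (ih (by simp only [List.length_drop]; omega))

theorem mem_kstar_of_dvd_of_drop_mem {d i : ℕ} (hd : ∀ w : List α, w.length = d → w ∈ S∗)
    {u : List α} (hi : d ∣ i) (hiu : i ≤ u.length) (hu : u.drop i ∈ S∗) : u ∈ S∗ :=
  List.take_append_drop i u ▸ append_mem_kstar_s11 (mem_kstar_of_dvd_length hd (by simpa [hiu])) hu

theorem finite_compl_kstar_of_coprime [Finite α] {a b : ℕ} (hab : a.Coprime b)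
    (ha : ∀ w : List α, w.length = a → w ∈ S∗) (hb : ∀ w : List α, w.length = b → w ∈ S∗) :
    Set.Finite ((S∗ : Language α)ᶜ) := by
  refine (List.finite_length_lt α (a.pred * b.pred)).subset fun w hw => ?_
  by_contra hlen
  obtain ⟨i, j, hij⟩ := Nat.exists_add_mul_eq_of_gcd_dvd_of_mul_pred_le a b w.length
    (by simp [hab.gcd_eq_one]) (not_lt.1 hlen)
  refine hw (mem_kstar_of_dvd_of_drop_mem (u := w) ha (dvd_mul_left a i) (by omega) ?_)
  exact mem_kstar_of_dvd_length hb ⟨j, by simp only [List.length_drop]; rw [mul_comm b]; omega⟩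

theorem exists_forall_length_gt_mem_of_finite_compl {L : Language α} (h : Set.Finite Lᶜ) :
    ∃ N, ∀ w : List α, N < w.length → w ∈ L := by
  obtain ⟨N, hN⟩ := (h.image List.length).bddAbove
  exact ⟨N, fun w hw => by_contra fun hwL => (hN ⟨w, hwL, rfl⟩).not_gt hw⟩

theorem exists_drop_eq_append_of_not_dvd_length {m n : ℕ}
    (hS : ∀ w ∈ S, w.length = m ∨ w.length = n) {x : List α} (hx : x ∈ S∗)
    (hdvd : ¬m ∣ x.length) :
    ∃ p v z, m ∣ p ∧ x.drop p = v ++ z ∧ v ∈ S ∧ v.length = n ∧ z ∈ S∗ := by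
  obtain ⟨L, rfl, hL⟩ := mem_kstar.1 hx
  clear hx
  induction L with
  | nil => simp at hdvd
  | cons a L ih =>
    have hLS : ∀ y ∈ L, y ∈ S := fun y hy => hL y (List.mem_cons_of_mem a hy)
    have ha := hL a List.mem_cons_self
    rw [List.flatten_cons] at hdvd ⊢
    rcases hS a ha with ham | han
    · rw [List.length_append, ham, Nat.dvd_add_right dvd_rfl] at hdvd
      obtain ⟨p, v, z, hp, hpx, hv⟩ := ih hLS hdvd
      refine ⟨m + p, v, z, dvd_add dvd_rfl hp, ?_, hv⟩
      rw [← ham, List.drop_length_add_append, hpx]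
    · exact ⟨0, a, L.flatten, dvd_zero m, rfl, ha, han, join_mem_kstar hLS⟩

section TwoLengths

variable {m r : ℕ}

theorem le_length_and_drop_mem_kstar_of_append_mem_kstar
    (hS : ∀ w ∈ S, w.length = m ∨ w.length = m + r) (hm : 0 < m) {w y : List α} (hw : w ∉ S)
    (hwm : w.length = m) (h : w ++ y ∈ S∗) :
    r ≤ y.length ∧ y.drop r ∈ S∗ := by
  rw [← one_add_self_mul_kstar_eq_kstar, mem_add, mem_one, mem_mul] at h
  obtain h | ⟨a, ha, b, hb, hab⟩ := h
  · simp only [List.append_eq_nil_iff] at h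
    rw [h.1, List.length_nil] at hwm
    omega
  rcases hS a ha with ham | hamr
  · exact absurd ((List.append_inj hab (ham.trans hwm.symm)).1 ▸ ha) hw
  · have hlen := congrArg List.length hab
    simp only [List.length_append] at hlen
    refine ⟨by omega, ?_⟩
    have hdrop : (w ++ y).drop (m + r) = b := by rw [← hab, List.drop_left' hamr]
    rw [← hwm, List.drop_length_add_append] at hdrop
    exact hdrop ▸ hb

theorem mem_of_length_eq_of_forall_length_gt_mem_kstar
    (hS : ∀ w ∈ S, w.length = m ∨ w.length = m + r) (hr : 0 < r) (hrm : r ≤ m) {N : ℕ}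
    (hN : ∀ x : List α, N < x.length → x ∈ S∗) {w : List α} (hwm : w.length = m) : w ∈ S := by
  by_contra hw
  set s := w.take r
  have hs : s.length = r := by simp only [s, List.length_take]; omega
  have hX : ∀ k, (List.replicate k (w ++ s)).flatten ++ w ∉ S∗ := by
    intro k
    induction k with
    | zero =>
      intro h
      have := (le_length_and_drop_mem_kstar_of_append_mem_kstar hS (by omega) hw hwm (y := [])
        (by simpa using h)).1
      rw [List.length_nil] at this
      omega
    | succ k ih =>
      intro h
      rw [List.replicate_succ, List.flatten_cons, List.append_assoc, List.append_assoc] at h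
      have := (le_length_and_drop_mem_kstar_of_append_mem_kstar hS (by omega) hw hwm h).2
      rw [List.drop_left' hs] at this
      exact ih this
  refine hX N (hN _ ?_)
  have : N ≤ N * (m + r) := Nat.le_mul_of_pos_right _ (by omega)
  simp only [List.length_append, List.length_flatten, List.map_replicate, List.sum_replicate,
    smul_eq_mul, hwm, hs]
  omega

theorem mem_kstar_of_take_eq_append (hm : ∀ w : List α, w.length = m → w ∈ S∗)
    {Y a v : List α} (ha : m ∣ a.length) (hv : v ∈ S∗)
    (hY : Y.take (a.length + v.length) = a ++ v)
    (hrest : m ∣ Y.length - (a.length + v.length)) : Y ∈ S∗ := by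
  rw [← List.take_append_drop (a.length + v.length) Y, hY]
  exact append_mem_kstar_s11 (append_mem_kstar_s11 (mem_kstar_of_dvd_length hm ha) hv)
    (mem_kstar_of_dvd_length hm (by rwa [List.length_drop]))

theorem append_mem_kstar_of_drop_mem_kstar (hm : ∀ w : List α, w.length = m → w ∈ S∗)
    {A B W : List α} {p : ℕ} (hB : m ∣ B.length) (hp : m ∣ p)
    (hABp : A.length + B.length ≤ p) (hpW : p ≤ A.length + B.length + W.length)
    (h : (A ++ B ++ W).drop p ∈ S∗) : A ++ W ∈ S∗ := by
  obtain ⟨t, rfl⟩ := Nat.exists_eq_add_of_le hABp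
  rw [← List.length_append, List.drop_length_add_append] at h
  refine mem_kstar_of_dvd_of_drop_mem hm (i := A.length + t) ?_
    (by simp only [List.length_append]; omega) (by rwa [List.drop_length_add_append])
  rw [add_comm A.length, add_assoc] at hp
  exact (Nat.dvd_add_right hB).1 hp

theorem append_replicate_append_mem_kstar_of_succ
    (hS : ∀ w ∈ S, w.length = m ∨ w.length = m + r) (hr : 0 < r) (hrm : r < m)
    (hm : ∀ w : List α, w.length = m → w ∈ S∗) {q : ℕ} {A B C : List α}
    (hA : m ∣ A.length) (hB : m ∣ B.length) (hB0 : B ≠ []) (hC : C.length = m * q + r)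
    (hBC : B.take r = C.take r) (k : ℕ)
    (h : A ++ (List.replicate (k + 2) B).flatten ++ C ∈ S∗) :
    A ++ (List.replicate (k + 1) B).flatten ++ C ∈ S∗ := by
  set U := A ++ (List.replicate (k + 1) B).flatten
  set W := (List.replicate (k + 1) B).flatten ++ C
  have hXU : A ++ (List.replicate (k + 2) B).flatten ++ C = U ++ (B ++ C) := by
    simp [U, List.replicate_succ']
  have hXW : A ++ (List.replicate (k + 2) B).flatten ++ C = A ++ B ++ W := by
    simp [W, List.replicate_succ]
  have hYW : U ++ C = A ++ W := List.append_assoc _ _ _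
  have hU : m ∣ U.length := by
    simpa [U] using dvd_add hA (dvd_mul_of_dvd_right hB _)
  have hBm : m ≤ B.length := Nat.le_of_dvd (List.length_pos_iff.2 hB0) hB
  have hAB : A.length + B.length ≤ U.length := by
    simp [U, Nat.add_mul]
  clear_value U W
  have hagree : (U ++ (B ++ C)).take (U.length + r) = (U ++ C).take (U.length + r) := by
    rw [List.take_length_add_append, List.take_length_add_append,
      List.take_append_of_le_length (by omega), hBC]
  have hndvd : ¬m ∣ (U ++ (B ++ C)).length := by
    rw [List.length_append, List.length_append, hC, ← add_assoc, ← add_assoc,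
      Nat.dvd_add_right ((hU.add hB).add (dvd_mul_right m q))]
    exact Nat.not_dvd_of_pos_of_lt hr hrm
  rw [hXU] at h
  obtain ⟨p, v, z, hp, hpx, hv, hvlen, hz⟩ := exists_drop_eq_append_of_not_dvd_length hS h hndvd
  have hpX : p + (m + r) ≤ U.length + (B.length + C.length) := by
    have := congrArg List.length hpx
    simp only [List.length_drop, List.length_append] at this
    omega
  by_cases hpU : p + m ≤ U.length
  · have hXp : ((U ++ (B ++ C)).take p).length = p := by
      simp only [List.length_take, List.length_append]
      omega
    refine mem_kstar_of_take_eq_append hm (hXp ▸ hp) (le_kstar (a := S) hv) ?_ ?_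
    · have hpre : ∀ X : List α,
          X.take (p + (m + r)) = (X.take (U.length + r)).take (p + (m + r)) := fun X => by
        rw [List.take_take, Nat.min_eq_left (by omega)]
      rw [hXp, hvlen, hpre, ← hagree, ← hpre, List.take_add, hpx, List.take_left' hvlen]
    · rw [hXp, hvlen, List.length_append, hC,
        show U.length + (m * q + r) - (p + (m + r)) = U.length - (p + m) + m * q by omega]
      exact (Nat.dvd_sub hU (hp.add dvd_rfl)).add (dvd_mul_right m q)
  · have hUp : U.length ≤ p := by
      by_contra hlt
      have := Nat.le_of_dvd (by omega) (Nat.dvd_sub hU hp)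
      omega
    have hXlen := congrArg List.length (hXU.symm.trans hXW)
    simp only [List.length_append] at hXlen
    rw [hYW]
    refine append_mem_kstar_of_drop_mem_kstar hm hB hp (by omega) (by omega) ?_
    rw [← hXW, hXU, hpx]
    exact append_mem_kstar_s11 (le_kstar (a := S) hv) hz

theorem append_append_mem_kstar_of_replicate
    (hS : ∀ w ∈ S, w.length = m ∨ w.length = m + r) (hr : 0 < r) (hrm : r < m)
    (hm : ∀ w : List α, w.length = m → w ∈ S∗) {q : ℕ} {A B C : List α}
    (hA : m ∣ A.length) (hB : m ∣ B.length) (hB0 : B ≠ []) (hC : C.length = m * q + r)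
    (hBC : B.take r = C.take r) (k : ℕ)
    (h : A ++ (List.replicate (k + 1) B).flatten ++ C ∈ S∗) : A ++ B ++ C ∈ S∗ := by
  induction k with
  | zero => simpa using h
  | succ k ih =>
    exact ih (append_replicate_append_mem_kstar_of_succ hS hr hrm hm hA hB hB0 hC hBC k h)

theorem exists_lt_drop_take_eq [Fintype α] {x : List α}
    (hx : m * Fintype.card α ^ r + r ≤ x.length) :
    ∃ i j, i < j ∧ j ≤ Fintype.card α ^ r ∧
      (x.drop (m * i)).take r = (x.drop (m * j)).take r := by
  let window : Fin (Fintype.card α ^ r + 1) → List.Vector α r := fun i =>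
    ⟨(x.drop (m * i)).take r, by
      have := Nat.mul_le_mul_left m (Nat.le_of_lt_succ i.isLt)
      simp only [List.length_take, List.length_drop]
      omega⟩
  obtain ⟨i, j, hne, heq⟩ := Fintype.exists_ne_map_eq_of_card_lt window (by simp [card_vector])
  rcases hne.lt_or_gt with hij | hji
  · exact ⟨i, j, hij, Nat.le_of_lt_succ j.isLt, congrArg Subtype.val heq⟩
  · exact ⟨j, i, hji, Nat.le_of_lt_succ i.isLt, congrArg Subtype.val heq.symm⟩

theorem mem_kstar_of_length_eq_of_forall_length_gt_mem_kstar [Fintype α]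
    (hS : ∀ w ∈ S, w.length = m ∨ w.length = m + r) (hr : 0 < r) (hrm : r < m)
    (hm : ∀ w : List α, w.length = m → w ∈ S∗) {N : ℕ}
    (hN : ∀ x : List α, N < x.length → x ∈ S∗) {x : List α}
    (hx : x.length = m * Fintype.card α ^ r + r) : x ∈ S∗ := by
  obtain ⟨i, j, hij, hj, hwin⟩ := exists_lt_drop_take_eq hx.ge
  have hmij : m * i + m * (j - i) = m * j := by rw [← mul_add, Nat.add_sub_cancel' hij.le]
  have hmj : m * j ≤ m * Fintype.card α ^ r := Nat.mul_le_mul_left m hj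
  have hmji : m ≤ m * (j - i) := Nat.le_mul_of_pos_right m (by omega)
  set B := (x.drop (m * i)).take (m * (j - i))
  have hB : B.length = m * (j - i) := by
    simp only [B, List.length_take, List.length_drop]
    omega
  have hsplit : x = x.take (m * i) ++ B ++ x.drop (m * j) := by
    rw [List.append_assoc, ← hmij, ← List.drop_drop, List.take_append_drop, List.take_append_drop]
  obtain ⟨q, hq⟩ : m ∣ m * Fintype.card α ^ r - m * j :=
    Nat.dvd_sub (dvd_mul_right _ _) (dvd_mul_right _ _)
  rw [hsplit]
  refine append_append_mem_kstar_of_replicate hS hr hrm hm (q := q) ?_ ?_ ?_ ?_ ?_ N (hN _ ?_)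
  · rw [List.length_take, Nat.min_eq_left (by omega)]
    exact dvd_mul_right m i
  · exact hB ▸ dvd_mul_right m (j - i)
  · exact List.ne_nil_of_length_pos (by omega)
  · simp only [List.length_drop]
    omega
  · rw [List.take_take, Nat.min_eq_left (by omega), hwin]
  · have : N + 1 ≤ (N + 1) * B.length := Nat.le_mul_of_pos_right _ (by omega)
    simp only [List.length_append, List.length_flatten, List.map_replicate, List.sum_replicate,
      smul_eq_mul]
    omega

end TwoLengths

end Language

theorem cofinite_iff_two_lengths_general {α : Type} [Fintype α] (m n : ℕ)
    (hmn : m < n) (hn2m : n < 2 * m) (hgcd : Nat.gcd m n = 1)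
    (S : Language α) (hS : ∀ w ∈ S, w.length = m ∨ w.length = n)
    (l : ℕ) (hl : l = m * Fintype.card α ^ (n - m) + (n - m)) :
    Set.Finite ((S∗ : Language α)ᶜ) ↔
      ((∀ w : List α, w.length = m → w ∈ S) ∧ (∀ w : List α, w.length = l → w ∈ S∗)) := by
  obtain ⟨r, rfl⟩ : ∃ r, n = m + r := ⟨n - m, by omega⟩
  rw [Nat.add_sub_cancel_left] at hl
  subst hl
  constructor
  · intro hfin
    obtain ⟨N, hN⟩ := Language.exists_forall_length_gt_mem_of_finite_compl hfin
    have hmS : ∀ w : List α, w.length = m → w ∈ S :=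
      fun w => Language.mem_of_length_eq_of_forall_length_gt_mem_kstar hS (by omega) (by omega) hN
    exact ⟨hmS, fun x => Language.mem_kstar_of_length_eq_of_forall_length_gt_mem_kstar hS
      (by omega) (by omega) (fun w hw => le_kstar (a := S) (hmS w hw)) hN⟩
  · rintro ⟨hmS, hlS⟩
    have hcop : m.Coprime (m * Fintype.card α ^ r + r) := by
      rwa [Nat.coprime_mul_left_add_right, ← Nat.coprime_add_self_right, add_comm]
    exact Language.finite_compl_kstar_of_coprime hcop
      (fun w hw => le_kstar (a := S) (hmS w hw)) hlS

/-- If `0 < m < n < 2m` and `gcd(m,n) = 1`, and `S ⊆ Σ^m ∪ Σ^n`, then `S∗`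
is co-finite iff `Σ^m ⊆ S` and `Σ^l ⊆ S∗`, where `l = m·|Σ|^{n−m} + (n−m)`. -/
theorem cofinite_iff_two_lengths {α : Type} [Fintype α] (m n : ℕ)
    (hm : 0 < m) (hmn : m < n) (hn2m : n < 2 * m) (hgcd : Nat.gcd m n = 1)
    (S : Language α) (hS : ∀ w ∈ S, w.length = m ∨ w.length = n)
    (l : ℕ) (hl : l = m * Fintype.card α ^ (n - m) + (n - m)) :
    Set.Finite ((S∗ : Language α)ᶜ) ↔
      ((∀ w : List α, w.length = m → w ∈ S) ∧ (∀ w : List α, w.length = l → w ∈ S∗)) :=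
  cofinite_iff_two_lengths_general m n hmn hn2m hgcd S hS l hl
end

section
/- Let w and x be nonempty words over Σ, let y be an infinite word beginning with w followed by any infinite concatenation of elements of {w, x}, and let z be an infinite word beginning with x followed by any infinite concatenation of elements of {w, x}. Then the following are equivalent: (a) y and z agree on a prefix of length |w| + |x| − gcd(|w|, |x|); (b) wx = xw; (c) y = z. -/
/-- `InfCatFrom first S y` says the infinite word `y : ℕ → α` is `first` followed by an
infinite concatenation of words from `S`: there is a sequence of factors, starting with
`first`, all later ones in `S`, whose finite concatenations are all prefixes of `y`. -/
def InfCatFrom {α : Type} (first : List α) (S : Set (List α)) (y : ℕ → α) : Prop :=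
  ∃ f : ℕ → List α, f 0 = first ∧ (∀ n, 1 ≤ n → f n ∈ S) ∧
    ∀ n : ℕ, ∀ i : ℕ, ∀ h : i < ((List.ofFn fun j : Fin n => f j.val).flatten).length,
      y i = ((List.ofFn fun j : Fin n => f j.val).flatten).get ⟨i, h⟩

/-!
Euclid's algorithm on the lengths. If `|w| ≤ |x|`, agreement on the first `|w|` letters forces
`x = w v`; dropping the first `|w|` letters of `y` and `z` yields infinite words in
`w{w,v}^ω` and `v{w,v}^ω` which agree on `|w| + |v| - gcd(|w|,|v|)` letters, since
`gcd(|w|, |w| + |v|) = gcd(|w|, |v|)`. By induction `wv = vw`, whence `wx = xw`.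
Conversely, if `w` and `x` commute then all products of them commute, and two commuting
prefixes of `y` and `z` agree on their common length.
-/

open Filter Computability

namespace Language

variable {α : Type*}

theorem mem_singleton_mul {w u : List α} {L : Language α} :
    u ∈ ({w} : Language α) * L ↔ ∃ v ∈ L, u = w ++ v := by
  simp only [mem_mul]
  constructor
  · rintro ⟨a, rfl, v, hv, rfl⟩
    exact ⟨v, hv, rfl⟩
  · rintro ⟨v, hv, rfl⟩
    exact ⟨w, rfl, v, hv, rfl⟩

theorem pair_comm (a b : List α) : ({a, b} : Language α) = {b, a} :=
  Set.pair_comm a b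

theorem mem_kstar_of_mem {w : List α} {L : Language α} (hw : w ∈ L) : w ∈ L∗ :=
  (le_kstar : L ≤ L∗) hw

theorem singleton_mul_kstar_le {w : List α} {L : Language α} (hw : w ∈ L) :
    {w} * L∗ ≤ L∗ := by
  intro u hu
  obtain ⟨v, hv, rfl⟩ := mem_singleton_mul.1 hu
  rw [← kstar_mul_kstar L]
  exact append_mem_mul (mem_kstar_of_mem hw) hv

theorem append_comm_of_mem_kstar {L : Language α} {u v : List α}
    (hv : ∀ t ∈ L, t ++ v = v ++ t) (hu : u ∈ L∗) : u ++ v = v ++ u := by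
  obtain ⟨l, rfl, hl⟩ := mem_kstar.1 hu
  clear hu
  induction l with
  | nil => simp
  | cons t l ih =>
    rw [List.flatten_cons, List.append_assoc, ih fun s hs => hl s (.tail _ hs),
      ← List.append_assoc, hv t (hl t (.head _)), List.append_assoc]

theorem append_comm_of_mem_kstar_of_pairwise {L : Language α}
    (hL : ∀ s ∈ L, ∀ t ∈ L, s ++ t = t ++ s) {u v : List α} (hu : u ∈ L∗) (hv : v ∈ L∗) :
    u ++ v = v ++ u :=
  append_comm_of_mem_kstar (fun t ht => (append_comm_of_mem_kstar (hL · · t ht) hv).symm) hu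

section Prefix

variable (w v : List α)

theorem pair_append_le : ({w, w ++ v} : Language α) ≤ {w} * ({w, v} : Language α)∗ := by
  rintro u (rfl | rfl)
  · exact mem_singleton_mul.2 ⟨[], nil_mem_kstar _, (List.append_nil _).symm⟩
  · exact mem_singleton_mul.2 ⟨v, mem_kstar_of_mem (Or.inr rfl), rfl⟩

theorem kstar_pair_append_le : ({w, w ++ v} : Language α)∗ ≤ ({w, v} : Language α)∗ :=
  (kstar_mono ((pair_append_le w v).trans (singleton_mul_kstar_le (Or.inl rfl)))).trans_eq
    (kstar_idem _)

theorem mem_singleton_mul_kstar_of_mem_kstar {u : List α}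
    (hu : u ∈ ({w, w ++ v} : Language α)∗) (hne : u ≠ []) :
    u ∈ {w} * ({w, v} : Language α)∗ := by
  rw [← one_add_self_mul_kstar_eq_kstar, mem_add, mem_one] at hu
  have := mul_le_mul' (pair_append_le w v) (kstar_pair_append_le w v) (hu.resolve_left hne)
  rwa [mul_assoc, kstar_mul_kstar] at this

theorem singleton_append_mul_kstar_le :
    {w ++ v} * ({w, w ++ v} : Language α)∗ ≤ {w} * ({v} * ({w, v} : Language α)∗) := by
  intro u hu
  obtain ⟨t, ht, rfl⟩ := mem_singleton_mul.1 hu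
  exact mem_singleton_mul.2
    ⟨v ++ t, mem_singleton_mul.2 ⟨t, kstar_pair_append_le w v ht, rfl⟩, List.append_assoc ..⟩

end Prefix

end Language

namespace Stream'

variable {α : Type*}

theorem take_eq_of_forall_lt {y : Stream' α} {p : List α}
    (h : ∀ i (hi : i < p.length), y.get i = p[i]) : y.take p.length = p :=
  List.ext_getElem (length_take _ _) fun i hi _ => by
    rw [take_get]; exact h i (by simpa using hi)

theorem take_eq_take_of_forall_lt {y z : Stream' α} {n : ℕ} (h : ∀ i < n, y.get i = z.get i) :
    y.take n = z.take n :=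
  List.ext_getElem (by simp) fun i hi _ => by
    simp only [take_get]; exact h i (by simpa using hi)

theorem eq_of_frequently_take_mem_kstar {L : Language α}
    (hL : ∀ s ∈ L, ∀ t ∈ L, s ++ t = t ++ s) {y z : Stream' α}
    (hy : ∃ᶠ n in atTop, y.take n ∈ L∗) (hz : ∃ᶠ n in atTop, z.take n ∈ L∗) : y = z := by
  ext i
  obtain ⟨m, hm, hym⟩ := frequently_atTop.1 hy (i + 1)
  obtain ⟨n, hn, hzn⟩ := frequently_atTop.1 hz (i + 1)
  have := congrArg (·[i]?) (Language.append_comm_of_mem_kstar_of_pairwise hL hym hzn)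
  rw [List.getElem?_append_left (by rw [length_take]; omega : i < (y.take m).length),
    List.getElem?_append_left (by rw [length_take]; omega : i < (z.take n).length),
    getElem?_take (by omega), getElem?_take (by omega)] at this
  exact Option.some_injective _ this

variable {w : List α} {L : Language α} {y : Stream' α}

theorem take_add_mem_singleton_mul_iff {n : ℕ} :
    y.take (w.length + n) ∈ {w} * L ↔ y.take w.length = w ∧ (y.drop w.length).take n ∈ L := by
  rw [take_add, Language.mem_singleton_mul]
  constructor
  · rintro ⟨v, hv, h⟩
    obtain ⟨hw, rfl⟩ := List.append_inj h (length_take _ _)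
    exact ⟨hw, hv⟩
  · rintro ⟨hw, hv⟩
    exact ⟨_, hv, by rw [hw]⟩

theorem frequently_take_mem_singleton_mul_iff :
    (∃ᶠ n in atTop, y.take n ∈ {w} * L) ↔
      y.take w.length = w ∧ ∃ᶠ n in atTop, (y.drop w.length).take n ∈ L := by
  calc (∃ᶠ n in atTop, y.take n ∈ {w} * L)
      ↔ ∃ᶠ n in atTop, y.take (n + w.length) ∈ {w} * L := by
        conv_lhs => rw [← map_add_atTop_eq_nat w.length]
        exact frequently_map
    _ ↔ _ := by
        simp only [add_comm _ w.length, take_add_mem_singleton_mul_iff,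
          frequently_and_distrib_left]

end Stream'

theorem List.length_le_length_flatten {α : Type*} {l : List (List α)} (hl : ∀ u ∈ l, u ≠ []) :
    l.length ≤ l.flatten.length := by
  rw [List.length_flatten, ← List.length_map List.length]
  exact List.length_le_sum_of_one_le _ fun n hn => by
    obtain ⟨u, hu, rfl⟩ := List.mem_map.1 hn
    exact List.length_pos_iff.2 (hl u hu)

theorem InfCatFrom.frequently_take_mem {α : Type} {first : List α} {S : Language α}
    {y : Stream' α} (hy : InfCatFrom first S y) (hS : ∀ u ∈ S, u ≠ []) :
    ∃ᶠ n in atTop, y.take n ∈ {first} * S∗ := by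
  obtain ⟨f, hf0, hfS, hyf⟩ := hy
  refine frequently_atTop.2 fun m => ?_
  set tail := List.ofFn fun j : Fin m => f (j + 1)
  have htail : ∀ u ∈ tail, u ∈ S := by
    simp only [tail, List.mem_ofFn]
    rintro u ⟨j, rfl⟩
    exact hfS _ (Nat.le_add_left 1 j)
  have hp : (List.ofFn fun j : Fin (m + 1) => f j).flatten = first ++ tail.flatten := by
    simp [tail, List.ofFn_succ, hf0]
  have hlen : m ≤ tail.flatten.length :=
    (List.length_ofFn).symm.le.trans (List.length_le_length_flatten fun u hu => hS u (htail u hu))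
  have hprefix : y.take (first ++ tail.flatten).length = first ++ tail.flatten :=
    Stream'.take_eq_of_forall_lt fun i hi => by
      have := hyf (m + 1) i (by rwa [hp])
      simp only [hp, List.get_eq_getElem] at this
      exact this
  refine ⟨(first ++ tail.flatten).length, hlen.trans (by simp), ?_⟩
  rw [hprefix]
  exact Language.append_mem_mul rfl (Language.join_mem_kstar htail)

open Stream' Language in
theorem append_comm_of_agree_on_prefix {α : Type*} {w x : List α} {y z : Stream' α}
    (hy : ∃ᶠ n in atTop, y.take n ∈ {w} * ({w, x} : Language α)∗)
    (hz : ∃ᶠ n in atTop, z.take n ∈ {x} * ({w, x} : Language α)∗)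
    (h : ∀ i < w.length + x.length - Nat.gcd w.length x.length, y.get i = z.get i) :
    w ++ x = x ++ w := by
  induction hN : w.length + x.length using Nat.strong_induction_on generalizing w x y z with
  | _ N ih =>
  wlog hle : w.length ≤ x.length generalizing w x y z
  · refine (this (by rwa [pair_comm]) (by rwa [pair_comm]) (fun i hi => (h i ?_).symm)
      (by omega) (by omega)).symm
    rwa [add_comm, Nat.gcd_comm]
  obtain rfl | hw := eq_or_ne w []
  · simp
  obtain ⟨hyw, hy⟩ := frequently_take_mem_singleton_mul_iff.1 hy
  have hzx := (frequently_take_mem_singleton_mul_iff.1 hz).1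
  have hwx : w <+: x := by
    have hg : Nat.gcd w.length x.length ≤ x.length :=
      Nat.gcd_le_right _ (hle.trans_lt' (List.length_pos_iff.2 hw))
    rw [← hzx, ← hyw, take_eq_take_of_forall_lt fun i hi => h i (by omega)]
    exact (take_prefix _ _ _).2 hle
  obtain ⟨v, rfl⟩ := hwx
  -- a nonempty product of `w`s and `x = w v` still starts with `w`
  have hy' : ∃ᶠ n in atTop, (y.drop w.length).take n ∈ {w} * ({w, v} : Language α)∗ :=
    (hy.and_eventually (eventually_gt_atTop 0)).mono fun n ⟨hn, hpos⟩ =>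
      mem_singleton_mul_kstar_of_mem_kstar w v hn (List.ne_nil_of_length_pos (by simpa))
  have hz' : ∃ᶠ n in atTop, (z.drop w.length).take n ∈ {v} * ({w, v} : Language α)∗ :=
    (frequently_take_mem_singleton_mul_iff.1
      (hz.mono fun n hn => singleton_append_mul_kstar_le w v hn)).2
  have hcomm : w ++ v = v ++ w := by
    have hwpos := List.length_pos_iff.2 hw
    simp only [List.length_append, Nat.gcd_self_add_right] at h hN
    exact ih _ (by omega) hy' hz' (fun i hi => h (i + w.length) (by omega)) rfl
  rw [List.append_assoc, ← hcomm]

/-- a Fine–Wilf generalization. For nonempty words `w, x`, and infinite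
words `y ∈ w{w,x}^ω`, `z ∈ x{w,x}^ω`, TFAE: (a) `y` and `z` agree on a prefix of length
`|w| + |x| − gcd(|w|,|x|)`; (b) `wx = xw`; (c) `y = z`. -/
theorem fine_wilf_infinite {α : Type} (w x : List α) (hw : w ≠ []) (hx : x ≠ [])
    (y z : ℕ → α)
    (hy : InfCatFrom w {w, x} y) (hz : InfCatFrom x {w, x} z) :
    ((∀ i < w.length + x.length - Nat.gcd w.length x.length, y i = z i) ↔
      w ++ x = x ++ w) ∧
    ((w ++ x = x ++ w) ↔ y = z) := by
  have hS : ∀ u ∈ ({w, x} : Set (List α)), u ≠ [] := by rintro u (rfl | rfl) <;> assumption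
  have hy' := hy.frequently_take_mem hS
  have hz' := hz.frequently_take_mem hS
  have hab := append_comm_of_agree_on_prefix hy' hz'
  have hbc (hwx : w ++ x = x ++ w) : y = z := by
    have hL : ∀ s ∈ ({w, x} : Language α), ∀ t ∈ ({w, x} : Language α), s ++ t = t ++ s := by
      rintro s (rfl | rfl) t (rfl | rfl) <;> first | rfl | exact hwx | exact hwx.symm
    exact Stream'.eq_of_frequently_take_mem_kstar hL
      (hy'.mono fun n hn => Language.singleton_mul_kstar_le (Or.inl rfl) hn)
      (hz'.mono fun n hn => Language.singleton_mul_kstar_le (Or.inr rfl) hn)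
  exact ⟨⟨hab, fun hwx i _ => by rw [hbc hwx]⟩, ⟨hbc, fun hyz => hab fun i _ => by rw [hyz]⟩⟩
end

section
/- Let w, x be nonempty words over Σ with wx ≠ xw. Then for any y ∈ w{w,x}^ω and z ∈ x{w,x}^ω, the words y and z differ at some position ≤ |w| + |x| − 1 (indexing positions from 1). -/
namespace IWAux

variable {α : Type}

/-- `l` is a pointwise prefix of the infinite word `y`. -/
def Agrees (y : ℕ → α) (l : List α) : Prop :=
  ∀ i : ℕ, ∀ h : i < l.length, y i = l.get ⟨i, h⟩

/-- Partial concatenations of a factor sequence. -/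
def C (f : ℕ → List α) : ℕ → List α
  | 0 => []
  | n + 1 => C f n ++ f n

lemma flatten_ofFn_eq_C (f : ℕ → List α) (n : ℕ) :
    (List.ofFn fun j : Fin n => f j.val).flatten = C f n := by
  induction n with
  | zero => simp [C]
  | succ n ih =>
    rw [List.ofFn_succ']
    simp only [List.concat_eq_append, List.flatten_append, List.flatten_cons,
      List.flatten_nil, List.append_nil, C]
    rw [← ih]
    rfl

def ICF (first : List α) (S : Set (List α)) (y : ℕ → α) : Prop :=
  ∃ f : ℕ → List α, f 0 = first ∧ (∀ n, 1 ≤ n → f n ∈ S) ∧ ∀ n, Agrees y (C f n)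

lemma infCatFrom_iff (first : List α) (S : Set (List α)) (y : ℕ → α) :
    InfCatFrom first S y ↔ ICF first S y := by
  unfold InfCatFrom ICF Agrees
  simp only [List.get_eq_getElem, flatten_ofFn_eq_C]

lemma icf_mono {first : List α} {S S' : Set (List α)} {y : ℕ → α}
    (hSS : S ⊆ S') (h : ICF first S y) : ICF first S' y := by
  obtain ⟨f, h0, hS, hA⟩ := h
  exact ⟨f, h0, fun n hn => hSS (hS n hn), hA⟩

lemma agrees_append {y : ℕ → α} {l m : List α} :
    Agrees y (l ++ m) ↔ Agrees y l ∧ Agrees (fun i => y (l.length + i)) m := by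
  constructor
  · intro h
    constructor
    · intro i hi
      have h' : i < (l ++ m).length := by simp; omega
      rw [h i h']
      simp only [List.get_eq_getElem]
      exact List.getElem_append_left hi
    · intro i hi
      have h' : l.length + i < (l ++ m).length := by simp; omega
      show y (l.length + i) = _
      rw [h (l.length + i) h']
      simp only [List.get_eq_getElem]
      rw [List.getElem_append_right (by omega)]
      congr 1
      omega
  · rintro ⟨h1, h2⟩ i hi
    simp only [List.length_append] at hi
    simp only [List.get_eq_getElem]
    rcases lt_or_ge i l.length with h | h
    · rw [List.getElem_append_left h]
      exact h1 i h
    · rw [List.getElem_append_right h]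
      have := h2 (i - l.length) (by omega)
      simp only [List.get_eq_getElem] at this
      rw [← this]
      congr 1
      omega

/-- products of `u`'s and `v`'s. -/
inductive Prod2 (u v : List α) : List α → Prop
  | nil : Prod2 u v []
  | consu (l) : Prod2 u v l → Prod2 u v (u ++ l)
  | consv (l) : Prod2 u v l → Prod2 u v (v ++ l)

def T (u v : List α) : Set (List α) := {l | l ≠ [] ∧ Prod2 u v l}

lemma prod2_append {u v l m : List α} (hl : Prod2 u v l) (hm : Prod2 u v m) :
    Prod2 u v (l ++ m) := by
  induction hl with
  | nil => simpa using hm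
  | consu l h ih => rw [List.append_assoc]; exact .consu _ ih
  | consv l h ih => rw [List.append_assoc]; exact .consv _ ih

lemma prod2_swap {u v l : List α} (h : Prod2 u v l) : Prod2 v u l := by
  induction h with
  | nil => exact .nil
  | consu l h ih => exact .consv _ ih
  | consv l h ih => exact .consu _ ih

lemma T_swap (u v : List α) : T u v = T v u := by
  ext l
  exact and_congr_right fun _ => ⟨prod2_swap, prod2_swap⟩

lemma prod2_mono {u t l : List α} (h : Prod2 u (u ++ t) l) : Prod2 u t l := by
  induction h with
  | nil => exact .nil
  | consu l h ih => exact .consu _ ih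
  | consv l h ih => rw [List.append_assoc]; exact .consu _ (.consv _ ih)

lemma mem_T_left {u : List α} (v : List α) (hu : u ≠ []) : u ∈ T u v :=
  ⟨hu, by simpa using Prod2.consu (u := u) (v := v) [] .nil⟩

lemma mem_T_right (u : List α) {v : List α} (hv : v ≠ []) : v ∈ T u v :=
  ⟨hv, by simpa using Prod2.consv (u := u) (v := v) [] .nil⟩

lemma T_decomp {u t l : List α} (h : l ∈ T u (u ++ t)) :
    ∃ r, l = u ++ r ∧ Prod2 u t r := by
  obtain ⟨hne, hp⟩ := h
  cases hp with
  | nil => exact absurd rfl hne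
  | consu l h => exact ⟨l, rfl, prod2_mono h⟩
  | consv l h =>
    exact ⟨t ++ l, by rw [List.append_assoc], .consv _ (prod2_mono h)⟩

lemma agrees_head {first : List α} {S : Set (List α)} {y : ℕ → α}
    (h : ICF first S y) : Agrees y first := by
  obtain ⟨f, h0, _, hA⟩ := h
  have := hA 1
  simpa [C, h0] using this

/-- The core step, assuming `|u| ≤ |v|` and the induction hypothesis. -/
lemma core (N : ℕ)
    (IH : ∀ u v : List α, u.length + v.length < N → u ≠ [] → v ≠ [] →
      u ++ v ≠ v ++ u → ∀ y z : ℕ → α, ICF u (T u v) y → ICF v (T u v) z →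
      ∃ i < u.length + v.length - 1, y i ≠ z i)
    (u v : List α) (hN : u.length + v.length ≤ N) (hle : u.length ≤ v.length)
    (hu : u ≠ []) (hv : v ≠ []) (hcomm : u ++ v ≠ v ++ u) (y z : ℕ → α)
    (hy : ICF u (T u v) y) (hz : ICF v (T u v) z) :
    ∃ i < u.length + v.length - 1, y i ≠ z i := by
  have hul : 0 < u.length := List.length_pos_iff.mpr hu
  have hvl : 0 < v.length := List.length_pos_iff.mpr hv
  have hyu : Agrees y u := agrees_head hy
  have hzv : Agrees z v := agrees_head hz
  by_cases hag : ∀ i < u.length, y i = z i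
  · -- u is a prefix of v
    have htake : v.take u.length = u := by
      apply List.ext_getElem (by simp; omega)
      intro i h1 h2
      rw [List.getElem_take]
      have hiu : i < u.length := by simpa using h2
      have h3 : i < v.length := by omega
      have e1 := hyu i hiu
      have e2 := hzv i h3
      simp only [List.get_eq_getElem] at e1 e2
      rw [← e2, ← hag i hiu, e1]
    have hpre : v = u ++ v.drop u.length := by
      conv_lhs => rw [← List.take_append_drop u.length v]
      rw [htake]
    set t := v.drop u.length with ht
    have hvlen : v.length = u.length + t.length := by
      conv_lhs => rw [hpre]
      simp
    have htne : t ≠ [] := by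
      intro h
      apply hcomm
      have : v = u := by rw [hpre, h, List.append_nil]
      rw [this]
    have htl : 0 < t.length := List.length_pos_iff.mpr htne
    have hut : u ++ t ≠ t ++ u := by
      intro h
      apply hcomm
      rw [hpre, List.append_assoc, h]
    -- shift both words by |u|
    set y' : ℕ → α := fun i => y (u.length + i) with hy'def
    set z' : ℕ → α := fun i => z (u.length + i) with hz'def
    -- y' ∈ u · T(u,t)^ω
    obtain ⟨f, hf0, hfS, hfA⟩ := hy
    obtain ⟨r, hf1, hrP⟩ := T_decomp (by rw [← hpre]; exact hfS 1 le_rfl)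
    have hfT : ∀ n, 1 ≤ n → f n ∈ T u t := by
      intro n hn
      obtain ⟨hne, hp⟩ := hfS n hn
      exact ⟨hne, prod2_mono (by rw [← hpre]; exact hp)⟩
    have hy' : ICF u (T u t) y' := by
      refine ⟨fun m => if m = 0 then u else if m = 1 then r ++ f 2 else f (m + 1),
        rfl, ?_, ?_⟩
      · intro n hn
        rcases Nat.lt_or_ge n 2 with h2 | h2
        · interval_cases n
          simp only [if_neg one_ne_zero, if_pos rfl]
          obtain ⟨hne2, hp2⟩ := hfT 2 (by omega)
          exact ⟨by simp [hne2], prod2_append hrP hp2⟩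
        · simp only [if_neg (by omega : n ≠ 0), if_neg (by omega : n ≠ 1)]
          exact hfT (n + 1) (by omega)
      · -- partial concatenations
        set g : ℕ → List α := fun m => if m = 0 then u else if m = 1 then r ++ f 2 else f (m + 1)
          with hgdef
        have hCrel : ∀ m, 2 ≤ m → u ++ C g m = C f (m + 1) := by
          intro m hm
          induction m with
          | zero => omega
          | succ m ih =>
            rcases Nat.lt_or_ge m 2 with h2 | h2
            · interval_cases m
              · omega
              · show u ++ (C g 1 ++ g 1) = C f 2 ++ f 2
                have e1 : C g 1 = u := by simp [C, hgdef]
                have e2 : C f 2 = u ++ (u ++ r) := by simp [C, hf0, hf1]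
                have e3 : g 1 = r ++ f 2 := by simp [hgdef]
                rw [e1, e2, e3]
                simp [List.append_assoc]
            · show u ++ (C g m ++ g m) = C f (m + 1) ++ f (m + 1)
              rw [← List.append_assoc, ih h2]
              congr 1
              show (if m = 0 then u else if m = 1 then r ++ f 2 else f (m + 1)) = f (m + 1)
              rw [if_neg (by omega : ¬ m = 0), if_neg (by omega : ¬ m = 1)]
        intro m
        rcases Nat.lt_or_ge m 2 with h2 | h2
        · interval_cases m
          · intro i hi; simp [C] at hi
          · -- Agrees y' (C g 1) = Agrees y' u
            have hCg1 : C g 1 = u := by simp [C, hgdef]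
            rw [hCg1]
            have h3 := hfA 2
            have hC2 : C f 2 = u ++ (u ++ r) := by simp [C, hf0, hf1]
            rw [hC2] at h3
            have := (agrees_append.mp h3).2
            exact (agrees_append.mp this).1
        · have h3 := hfA (m + 1)
          rw [← hCrel m h2] at h3
          exact (agrees_append.mp h3).2
    -- z' ∈ t · T(u,t)^ω
    obtain ⟨fz, hfz0, hfzS, hfzA⟩ := hz
    have hfzT : ∀ n, 1 ≤ n → fz n ∈ T u t := by
      intro n hn
      obtain ⟨hne, hp⟩ := hfzS n hn
      exact ⟨hne, prod2_mono (by rw [← hpre]; exact hp)⟩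
    have hz' : ICF t (T u t) z' := by
      refine ⟨fun m => if m = 0 then t else fz m, rfl, ?_, ?_⟩
      · intro n hn
        simp only [if_neg (by omega : n ≠ 0)]
        exact hfzT n hn
      · set g : ℕ → List α := fun m => if m = 0 then t else fz m with hgdef
        have hCrel : ∀ m, 1 ≤ m → u ++ C g m = C fz m := by
          intro m hm
          induction m with
          | zero => omega
          | succ m ih =>
            rcases Nat.eq_zero_or_pos m with h1 | h1
            · subst h1
              have e1 : C g 1 = t := by simp [C, hgdef]
              have e2 : C fz 1 = v := by simp [C, hfz0]
              rw [e1, e2, hpre]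
            · show u ++ (C g m ++ g m) = C fz m ++ fz m
              rw [← List.append_assoc, ih h1]
              congr 1
              show (if m = 0 then t else fz m) = fz m
              rw [if_neg (by omega : ¬ m = 0)]
        intro m
        rcases Nat.eq_zero_or_pos m with h1 | h1
        · subst h1; intro i hi; simp [C] at hi
        · have h3 := hfzA m
          rw [← hCrel m h1] at h3
          exact (agrees_append.mp h3).2
    obtain ⟨i, hilt, hine⟩ := IH u t (by omega) hu htne hut y' z' hy' hz'
    exact ⟨u.length + i, by omega, hine⟩
  · push_neg at hag
    obtain ⟨i, hi, hne⟩ := hag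
    exact ⟨i, by omega, hne⟩

lemma key : ∀ N : ℕ, ∀ u v : List α, u.length + v.length ≤ N → u ≠ [] → v ≠ [] →
    u ++ v ≠ v ++ u → ∀ y z : ℕ → α, ICF u (T u v) y → ICF v (T u v) z →
    ∃ i < u.length + v.length - 1, y i ≠ z i := by
  intro N
  induction N using Nat.strong_induction_on with
  | _ N IH =>
    intro u v hN hu hv hcomm y z hy hz
    have IH' : ∀ u v : List α, u.length + v.length < N → u ≠ [] → v ≠ [] →
        u ++ v ≠ v ++ u → ∀ y z : ℕ → α, ICF u (T u v) y → ICF v (T u v) z →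
        ∃ i < u.length + v.length - 1, y i ≠ z i := by
      intro u v h hu hv hc y z hy hz
      exact IH (u.length + v.length) h u v le_rfl hu hv hc y z hy hz
    rcases le_total u.length v.length with hle | hle
    · exact core N IH' u v hN hle hu hv hcomm y z hy hz
    · have h := core N IH' v u (by omega) hle hv hu (fun h => hcomm h.symm) z y
        (by rw [T_swap]; exact hz) (by rw [T_swap]; exact hy)
      obtain ⟨i, hilt, hine⟩ := h
      exact ⟨i, by omega, fun h => hine h.symm⟩

end IWAux

/-- For nonempty words `w, x` with `wx ≠ xw`, any `y ∈ w{w,x}^ω` and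
`z ∈ x{w,x}^ω` differ at some (1-indexed) position at most `|w| + |x| − 1`. -/
theorem infinite_words_differ_early {α : Type} (w x : List α) (hw : w ≠ []) (hx : x ≠ [])
    (hcomm : w ++ x ≠ x ++ w) (y z : ℕ → α)
    (hy : InfCatFrom w {w, x} y) (hz : InfCatFrom x {w, x} z) :
    ∃ i < w.length + x.length - 1, y i ≠ z i := by
  rw [IWAux.infCatFrom_iff] at hy hz
  have hsub : ({w, x} : Set (List α)) ⊆ IWAux.T w x := by
    rintro s (rfl | rfl)
    · exact IWAux.mem_T_left _ hw
    · exact IWAux.mem_T_right _ hx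
  exact IWAux.key (w.length + x.length) w x le_rfl hw hx hcomm y z
    (IWAux.icf_mono hsub hy) (IWAux.icf_mono hsub hz)
end

section
/- Let S be a finite set of nonempty words over Σ, each of length at most n, such that S* is co-finite. Then the length of the longest word not in S* is strictly less than q = (2/(2|Σ|−1))·(2^n |Σ|^n − 1), and consequently the number of words in Σ* \ S* is at most (|Σ|^q − 1)/(|Σ| − 1). -/
/-! Reading a word from left to right, all that matters about a prefix `u` for the membership
of its extensions in `S∗` is the set of its *pending suffixes*: the suffixes `s` of length `< n`
with `u = p ++ s` and `p ∈ S∗`, because the factor of a factorisation of `u ++ v` that straddles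
the border starts less than `n` letters before it. A pending set is a set of suffixes of the last
`n - 1` letters of `u`, so there are at most `∑_{j<n} |Σ|^j 2^(j+1) = q` of them. If a word
`w ∉ S∗` had length `≥ q`, two prefixes `u` and `u ++ y` of `w` would have the same pending set,
and pumping `y` would give infinitely many words outside `S∗`. There are
`(|Σ|^q - 1)/(|Σ| - 1)` words of length `< q`. -/

open Computability Finset

variable {α : Type*}

def wordsOfLength (α : Type*) [Fintype α] (j : ℕ) : Finset (List α) :=
  (univ : Finset (List.Vector α j)).map ⟨List.Vector.toList, List.Vector.toList_injective⟩

theorem mem_wordsOfLength [Fintype α] {j : ℕ} {w : List α} :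
    w ∈ wordsOfLength α j ↔ w.length = j := by
  simp only [wordsOfLength, mem_map, mem_univ, true_and, Function.Embedding.coeFn_mk]
  exact ⟨fun ⟨v, hv⟩ => hv ▸ v.toList_length, fun h => ⟨⟨w, h⟩, rfl⟩⟩

theorem card_wordsOfLength [Fintype α] (j : ℕ) :
    #(wordsOfLength α j) = Fintype.card α ^ j := by
  rw [wordsOfLength, card_map, card_univ, card_vector]

open Classical in
noncomputable def wordsOfLengthLt (α : Type*) [Fintype α] (m : ℕ) : Finset (List α) :=
  (range m).biUnion (wordsOfLength α)

theorem mem_wordsOfLengthLt [Fintype α] {m : ℕ} {w : List α} :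
    w ∈ wordsOfLengthLt α m ↔ w.length < m := by
  simp [wordsOfLengthLt, mem_wordsOfLength]

theorem sum_wordsOfLengthLt [Fintype α] {M : Type*} [AddCommMonoid M] (m : ℕ) (f : ℕ → M) :
    ∑ w ∈ wordsOfLengthLt α m, f w.length = ∑ j ∈ range m, Fintype.card α ^ j • f j := by
  classical
  have hdisj : (range m : Set ℕ).PairwiseDisjoint (wordsOfLength α) :=
    fun i _ j _ hij => disjoint_left.2 fun w hi hj =>
      hij ((mem_wordsOfLength.1 hi).symm.trans (mem_wordsOfLength.1 hj))
  rw [wordsOfLengthLt, sum_biUnion hdisj]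
  refine sum_congr rfl fun j _ => ?_
  rw [sum_congr rfl fun w hw => congrArg f (mem_wordsOfLength.1 hw), sum_const,
    card_wordsOfLength]

theorem card_wordsOfLengthLt [Fintype α] (m : ℕ) :
    #(wordsOfLengthLt α m) = ∑ j ∈ range m, Fintype.card α ^ j := by
  rw [card_eq_sum_ones, sum_wordsOfLengthLt m fun _ => 1]
  simp

theorem sum_range_pow_smul_two_pow_succ (c n : ℕ) (hc : 1 ≤ c) :
    ∑ j ∈ range n, c ^ j • 2 ^ (j + 1) = 2 * (2 ^ n * c ^ n - 1) / (2 * c - 1) := by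
  have hdvd : 2 * c - 1 ∣ (2 * c) ^ n - 1 := Nat.sub_one_dvd_pow_sub_one _ _
  calc ∑ j ∈ range n, c ^ j • 2 ^ (j + 1) = 2 * ∑ j ∈ range n, (2 * c) ^ j := by
        rw [mul_sum]
        exact sum_congr rfl fun j _ => by rw [smul_eq_mul, mul_pow, pow_succ]; ring
    _ = 2 * (2 ^ n * c ^ n - 1) / (2 * c - 1) := by
        rw [Nat.geomSum_eq (by omega), ← Nat.mul_div_assoc _ hdvd, mul_pow]

namespace Language

theorem infinite_compl_of_leftQuotient_le {L : Language α} {u y v : List α} (hy : y ≠ [])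
    (hsub : L.leftQuotient (u ++ y) ≤ L.leftQuotient u) (hv : u ++ y ++ v ∉ L) :
    Set.Infinite (Lᶜ : Language α) := by
  let pumped (k : ℕ) : List α := u ++ ((List.replicate (k + 1) y).flatten ++ v)
  have pumped_notMem (k : ℕ) : pumped k ∉ L := by
    induction k with
    | zero => simpa [pumped] using hv
    | succ k ih =>
      intro hk
      have : u ++ y ++ ((List.replicate (k + 1) y).flatten ++ v) ∈ L := by
        simpa [pumped, List.replicate_succ, List.append_assoc] using hk
      exact ih (hsub this)
  have pumped_injective : Function.Injective pumped := by
    intro k l hkl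
    have := congrArg List.length hkl
    simp only [pumped, List.length_append, List.length_flatten, List.map_replicate,
      List.sum_replicate, smul_eq_mul] at this
    have : (k + 1) * y.length = (l + 1) * y.length := by omega
    have := Nat.eq_of_mul_eq_mul_right (List.length_pos_iff.2 hy) this
    omega
  exact Set.infinite_of_injective_forall_mem pumped_injective pumped_notMem

theorem length_lt_card_of_notMem {β : Type*} {L : Language α}
    (hL : Set.Finite (Lᶜ : Language α))
    (f : List α → β) (T : Finset β) (hfT : ∀ u, f u ∈ T)
    (hf : ∀ u u', f u = f u' → L.leftQuotient u ≤ L.leftQuotient u') {w : List α} (hw : w ∉ L) :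
    w.length < #T := by
  by_contra! hlen
  have hdistinct : ∀ i j, i < j → j ≤ w.length → f (w.take i) ≠ f (w.take j) := by
    intro i j hij hj hfij
    have htake : w.take i ++ (w.drop i).take (j - i) = w.take j := by
      rw [← List.take_add, Nat.add_sub_cancel' hij.le]
    refine (infinite_compl_of_leftQuotient_le (u := w.take i)
      (y := (w.drop i).take (j - i)) (v := w.drop j) ?_ ?_ ?_) hL
    · simp only [ne_eq, List.take_eq_nil_iff, List.drop_eq_nil_iff]
      omega
    · rw [htake]; exact hf _ _ hfij.symm
    · rwa [htake, List.take_append_drop]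
  obtain ⟨i, hi, j, hj, hij, hfij⟩ := exists_ne_map_eq_of_card_lt_of_maps_to
    (s := range (#T + 1)) (by simp) (f := fun i => f (w.take i)) (fun i _ => hfT _)
  simp only [mem_range] at hi hj
  rcases lt_or_gt_of_ne hij with h | h
  · exact hdistinct i j h (by omega) hfij
  · exact hdistinct j i h (by omega) hfij.symm

theorem exists_append_eq_of_append_mem_kstar {S : Language α} {n : ℕ}
    (hS : ∀ w ∈ S, w.length ≤ n) {u v : List α} (h : u ++ v ∈ S∗) :
    ∃ p ∈ S∗, ∃ s, p ++ s = u ∧ s.length ≤ n - 1 ∧ s ++ v ∈ S∗ := by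
  obtain ⟨L, hL, hLS⟩ := mem_kstar.1 h
  induction L generalizing u with
  | nil =>
    obtain ⟨rfl, -⟩ := List.append_eq_nil_iff.1 hL
    exact ⟨[], nil_mem_kstar S, [], rfl, Nat.zero_le _, h⟩
  | cons b L ih =>
    have hb := hLS b List.mem_cons_self
    have hLS' : ∀ y ∈ L, y ∈ S := fun y hy => hLS y (List.mem_cons_of_mem b hy)
    rcases List.append_eq_append_iff.1 (hL.trans List.flatten_cons) with
      ⟨r, rfl, rfl⟩ | ⟨c, rfl, hc⟩
    · rcases eq_or_ne r [] with rfl | hr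
      · rw [List.append_nil] at hb
        exact ⟨u, (le_kstar : S ≤ S∗) hb, [], List.append_nil u, Nat.zero_le _,
          join_mem_kstar hLS'⟩
      · have : u.length < (u ++ r).length := by simpa using List.length_pos_iff.2 hr
        exact ⟨[], nil_mem_kstar S, u, rfl, by have := hS _ hb; omega, h⟩
    · obtain ⟨p, hp, s, rfl, hs, hsv⟩ := ih (hc ▸ join_mem_kstar hLS') hc.symm hLS'
      exact ⟨b ++ p, (mul_kstar_le_kstar : S * S∗ ≤ S∗) (append_mem_mul hb hp), s,
        List.append_assoc .., hs, hsv⟩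

open Classical in
noncomputable def pendingSuffixes (S : Language α) (n : ℕ) (u : List α) : Finset (List α) :=
  (u.drop (u.length - (n - 1))).tails.toFinset.filter fun s => ∃ p ∈ S∗, p ++ s = u

theorem mem_pendingSuffixes {S : Language α} {n : ℕ} {u s : List α} :
    s ∈ pendingSuffixes S n u ↔ s.length ≤ n - 1 ∧ ∃ p ∈ S∗, p ++ s = u := by
  classical
  simp only [pendingSuffixes, mem_filter, List.mem_toFinset, List.mem_tails]
  refine and_congr_left fun ⟨p, _, hps⟩ => ⟨fun hs => ?_, fun hs => ?_⟩
  · have := hs.length_le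
    rw [List.length_drop] at this
    omega
  · refine List.suffix_of_suffix_length_le (hps ▸ List.suffix_append p s)
      (List.drop_suffix _ u) ?_
    rw [List.length_drop, ← hps, List.length_append]
    omega

theorem leftQuotient_kstar_le_of_pendingSuffixes_eq {S : Language α} {n : ℕ}
    (hS : ∀ w ∈ S, w.length ≤ n) {u u' : List α}
    (h : pendingSuffixes S n u = pendingSuffixes S n u') :
    (S∗).leftQuotient u ≤ (S∗).leftQuotient u' := by
  intro v hv
  obtain ⟨p, hp, s, rfl, hs, hsv⟩ := exists_append_eq_of_append_mem_kstar hS hv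
  have : s ∈ pendingSuffixes S n u' := h ▸ mem_pendingSuffixes.2 ⟨hs, p, hp, rfl⟩
  obtain ⟨-, p', hp', rfl⟩ := mem_pendingSuffixes.1 this
  show (p' ++ s) ++ v ∈ S∗
  rw [List.append_assoc]
  exact (kstar_mul_kstar S).le (append_mem_mul hp' hsv)

theorem pos_of_finite_compl_kstar [Nonempty α] {S : Language α} {n : ℕ}
    (hS : ∀ w ∈ S, w.length ≤ n) (hcof : Set.Finite ((S∗ : Language α)ᶜ)) : 0 < n := by
  obtain ⟨a⟩ := ‹Nonempty α›
  rw [Nat.pos_iff_ne_zero]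
  rintro rfl
  have hnil : ∀ x ∈ S∗, x = [] := by
    intro x hx
    obtain ⟨L, rfl, hL⟩ := mem_kstar.1 hx
    exact List.flatten_eq_nil_iff.2 fun y hy =>
      List.eq_nil_of_length_eq_zero (Nat.le_zero.1 (hS y (hL y hy)))
  refine infinite_compl_of_leftQuotient_le (u := []) (y := [a]) (v := [])
    (List.cons_ne_nil a []) (fun z hz => ?_) (fun h => ?_) hcof
  · exact absurd (hnil _ hz) (List.cons_ne_nil a z)
  · exact List.cons_ne_nil a [] (hnil _ h)

open Classical in
noncomputable def pendingSuffixFamilies (α : Type*) [Fintype α] (n : ℕ) :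
    Finset (Finset (List α)) :=
  (wordsOfLengthLt α n).biUnion fun t => t.tails.toFinset.powerset

theorem pendingSuffixes_mem_pendingSuffixFamilies [Fintype α] (S : Language α) {n : ℕ}
    (hn : 0 < n) (u : List α) : pendingSuffixes S n u ∈ pendingSuffixFamilies α n := by
  classical
  refine mem_biUnion.2 ⟨u.drop (u.length - (n - 1)), ?_, mem_powerset.2 (filter_subset _ _)⟩
  rw [mem_wordsOfLengthLt, List.length_drop]
  omega

theorem card_pendingSuffixFamilies_le [Fintype α] (n : ℕ) :
    #(pendingSuffixFamilies α n) ≤ ∑ j ∈ range n, Fintype.card α ^ j • 2 ^ (j + 1) := by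
  classical
  calc #(pendingSuffixFamilies α n)
      ≤ ∑ t ∈ wordsOfLengthLt α n, #t.tails.toFinset.powerset := card_biUnion_le
    _ ≤ ∑ t ∈ wordsOfLengthLt α n, 2 ^ (t.length + 1) := by
      refine sum_le_sum fun t _ => ?_
      rw [card_powerset, ← List.length_tails]
      exact Nat.pow_le_pow_right two_pos (List.toFinset_card_le _)
    _ = ∑ j ∈ range n, Fintype.card α ^ j • 2 ^ (j + 1) :=
      sum_wordsOfLengthLt n fun j => 2 ^ (j + 1)

end Language

theorem omitted_words_bounds_general {α : Type} [Fintype α] (hcard : 2 ≤ Fintype.card α) (n : ℕ)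
    (S : Language α)
    (hS : ∀ w ∈ S, w ≠ [] ∧ w.length ≤ n)
    (hcof : Set.Finite ((S∗ : Language α)ᶜ))
    (q : ℕ) (hq : q = 2 * (2 ^ n * Fintype.card α ^ n - 1) / (2 * Fintype.card α - 1)) :
    (∀ w : List α, w ∉ S∗ → w.length < q) ∧
    Set.ncard ((S∗ : Language α)ᶜ) ≤ (Fintype.card α ^ q - 1) / (Fintype.card α - 1) := by
  have hSn : ∀ w ∈ S, w.length ≤ n := fun w hw => (hS w hw).2
  have : Nonempty α := Fintype.card_pos_iff.1 (by omega)
  have hn := Language.pos_of_finite_compl_kstar hSn hcof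
  have hstates : #(Language.pendingSuffixFamilies α n) ≤ q := by
    rw [hq, ← sum_range_pow_smul_two_pow_succ _ _ (by omega)]
    exact Language.card_pendingSuffixFamilies_le n
  have hlen : ∀ w : List α, w ∉ S∗ → w.length < q := fun w hw =>
    (Language.length_lt_card_of_notMem hcof _ _
      (Language.pendingSuffixes_mem_pendingSuffixFamilies S hn)
      (fun _ _ => Language.leftQuotient_kstar_le_of_pendingSuffixes_eq hSn) hw).trans_le hstates
  refine ⟨hlen, ?_⟩
  calc Set.ncard ((S∗ : Language α)ᶜ) ≤ #(wordsOfLengthLt α q) := by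
        rw [← Set.ncard_coe_finset]
        exact Set.ncard_le_ncard (fun w hw => mem_wordsOfLengthLt.2 (hlen w hw)) (finite_toSet _)
    _ = (Fintype.card α ^ q - 1) / (Fintype.card α - 1) := by
        rw [card_wordsOfLengthLt, Nat.geomSum_eq hcard]

/-- Let `S` be a finite set of nonempty words over `Σ` (with at least two
letters), each of length at most `n`, such that `S∗` is co-finite. Then every word not in
`S∗` has length `< q = (2/(2|Σ|−1))·(2^n·|Σ|^n − 1)`, and the number of words not in `S∗` is
at most `(|Σ|^q − 1)/(|Σ| − 1)`. -/
theorem omitted_words_bounds {α : Type} [Fintype α] (hcard : 2 ≤ Fintype.card α) (n : ℕ)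
    (S : Language α) (hfin : S.Finite)
    (hS : ∀ w ∈ S, w ≠ [] ∧ w.length ≤ n)
    (hcof : Set.Finite ((S∗ : Language α)ᶜ))
    (q : ℕ) (hq : q = 2 * (2 ^ n * Fintype.card α ^ n - 1) / (2 * Fintype.card α - 1)) :
    (∀ w : List α, w ∉ S∗ → w.length < q) ∧
    Set.ncard ((S∗ : Language α)ᶜ) ≤ (Fintype.card α ^ q - 1) / (Fintype.card α - 1) :=
  omitted_words_bounds_general hcard n S hS hcof q hq
end
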